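/- arXiv:1812.11952 — 8 statements merged into one kernel-verified Lean document; each statement's English description precedes it below -/
import Mathlib

section
/- Let w be a weight structure on a triangulated category C. Then C_{w≥0} = (C_{w≤-1})^⊥ and C_{w≤0} = ^⊥(C_{w≥1}); that is, M ∈ C_{w≥0} if and only if Hom(X, M) = 0 for all X ∈ C_{w≤0}[-1], and M ∈ C_{w≤0} if and only if Hom(M, Y) = 0 for all Y ∈ C_{w≥0}[1]. -/
open CategoryTheory CategoryTheory.Limits CategoryTheory.Pretriangulated

universe v u

variable (C : Type u) [Category.{v} C] [Preadditive C] [HasZeroObject C]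
  [HasShift C ℤ] [∀ n : ℤ, (CategoryTheory.shiftFunctor C n).Additive] [Pretriangulated C]

/-- A weight structure on a triangulated category `C`, in the homological convention:
`le n` is the class `C_{w≤n} = C_{w≤0}[n]` and `ge n` is the class `C_{w≥n} = C_{w≥0}[n]`. -/
structure WeightStructure where
  le : ℤ → Set C
  ge : ℤ → Set C
  retract_le : ∀ (n : ℤ) (X Y : C) (i : Y ⟶ X) (r : X ⟶ Y), i ≫ r = 𝟙 Y → X ∈ le n → Y ∈ le n
  retract_ge : ∀ (n : ℤ) (X Y : C) (i : Y ⟶ X) (r : X ⟶ Y), i ≫ r = 𝟙 Y → X ∈ ge n → Y ∈ ge n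
  shift_le : ∀ (n i : ℤ) (X : C), X ∈ le n → X⟦i⟧ ∈ le (n + i)
  shift_ge : ∀ (n i : ℤ) (X : C), X ∈ ge n → X⟦i⟧ ∈ ge (n + i)
  le_mono : ∀ (n m : ℤ), n ≤ m → le n ⊆ le m
  ge_anti : ∀ (n m : ℤ), n ≤ m → ge m ⊆ ge n
  orth : ∀ (n : ℤ) (X Y : C), X ∈ le n → Y ∈ ge (n + 1) → ∀ f : X ⟶ Y, f = 0
  decomp : ∀ (X : C) (n : ℤ), ∃ (A B : C) (f : A ⟶ X) (g : X ⟶ B) (h : B ⟶ A⟦(1 : ℤ)⟧),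
    (Triangle.mk f g h ∈ distTriang C) ∧ A ∈ le n ∧ B ∈ ge (n + 1)

/-- `C_{w≥0} = (C_{w≤-1})^⊥` and `C_{w≤0} = ^⊥(C_{w≥1})`. -/
theorem weight_orthogonality_characterization (w : WeightStructure C) (M : C) :
    (M ∈ w.ge 0 ↔ ∀ X : C, X ∈ w.le (-1) → ∀ f : X ⟶ M, f = 0) ∧
    (M ∈ w.le 0 ↔ ∀ Y : C, Y ∈ w.ge 1 → ∀ f : M ⟶ Y, f = 0) := by
  constructor
  · constructor
    · intro hM X hX f
      exact w.orth (-1) X M hX (by norm_num; exact hM) f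
    · intro H
      obtain ⟨A, B, f, g, h, hT, hA, hB⟩ := w.decomp M (-1)
      have hf : f = 0 := H A hA f
      obtain ⟨r, hr⟩ := Triangle.yoneda_exact₂ _ hT (𝟙 M) (by simp [hf]; exact Limits.zero_comp)
      exact w.retract_ge 0 B M g r hr.symm (by norm_num at hB; exact hB)
  · constructor
    · intro hM Y hY f
      exact w.orth 0 M Y hM (by norm_num; exact hY) f
    · intro H
      obtain ⟨A, B, f, g, h, hT, hA, hB⟩ := w.decomp M 0
      have hg : g = 0 := H B (by norm_num at hB; exact hB) g
      obtain ⟨i, hi⟩ := Triangle.coyoneda_exact₂ _ hT (𝟙 M) (by simp [hg]; exact Limits.comp_zero)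
      exact w.retract_le 0 A M i f hi.symm hA
end

section
/- Let w be a weight structure on C, let m < l be integers, let g : M → M' be a morphism, and fix an m-weight decomposition w_{≤m}M → M → w_{≥m+1}M of M and an l-weight decomposition w_{≤l}M' → M' → w_{≥l+1}M' of M'. Then there exists a unique pair of morphisms h : w_{≤m}M → w_{≤l}M' and j : w_{≥m+1}M → w_{≥l+1}M' making the resulting diagram (a morphism between the two distinguished triangles extending g) commute. -/
open CategoryTheory CategoryTheory.Limits CategoryTheory.Pretriangulated

universe v u

variable (C : Type u) [Category.{v} C] [Preadditive C] [HasZeroObject C]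
  [HasShift C ℤ] [∀ n : ℤ, (CategoryTheory.shiftFunctor C n).Additive] [Pretriangulated C]

/-- For `m < l`, any `g : M ⟶ M'` extends uniquely to a morphism from a fixed `m`-weight
decomposition triangle of `M` to a fixed `l`-weight decomposition triangle of `M'`. -/
theorem unique_extension_to_weight_decompositions (w : WeightStructure C) (m l : ℤ)
    (hml : m < l) (M M' : C) (g : M ⟶ M')
    (L R : C) (a : L ⟶ M) (b : M ⟶ R) (c : R ⟶ L⟦(1 : ℤ)⟧)
    (hT : Triangle.mk a b c ∈ distTriang C) (hL : L ∈ w.le m) (hR : R ∈ w.ge (m + 1))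
    (L' R' : C) (a' : L' ⟶ M') (b' : M' ⟶ R') (c' : R' ⟶ L'⟦(1 : ℤ)⟧)
    (hT' : Triangle.mk a' b' c' ∈ distTriang C) (hL' : L' ∈ w.le l) (hR' : R' ∈ w.ge (l + 1)) :
    ∃! p : (L ⟶ L') × (R ⟶ R'),
      p.1 ≫ a' = a ≫ g ∧ b ≫ p.2 = g ≫ b' ∧
        p.2 ≫ c' = c ≫ (shiftFunctor C (1 : ℤ)).map p.1 := by
  -- The composite `L ⟶ M ⟶ M' ⟶ R'` vanishes since `L ∈ le l` and `R' ∈ ge (l+1)`.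
  have hzero : (a ≫ g) ≫ b' = 0 :=
    w.orth l L R' (w.le_mono m l hml.le hL) hR' _
  -- Factor `a ≫ g` through `a'`.
  obtain ⟨h, hh⟩ : ∃ h : L ⟶ L', a ≫ g = h ≫ a' :=
    Triangle.coyoneda_exact₂ _ hT' (a ≫ g) hzero
  -- Complete to a morphism of triangles.
  obtain ⟨j, hj₁, hj₂⟩ : ∃ j : R ⟶ R',
      b ≫ j = g ≫ b' ∧ c ≫ (shiftFunctor C (1 : ℤ)).map h = j ≫ c' :=
    complete_distinguished_triangle_morphism _ _ hT hT' h g hh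
  refine ⟨(h, j), ⟨hh.symm, hj₁, hj₂.symm⟩, ?_⟩
  rintro ⟨h', j'⟩ ⟨e₁, e₂, e₃⟩
  -- Uniqueness of the first component.
  have hL1 : h' = h := by
    have hd : (h' - h) ≫ a' = 0 := by
      rw [Preadditive.sub_comp, e₁, hh]; simp
    obtain ⟨u, hu⟩ := Triangle.coyoneda_exact₂ _ (inv_rot_of_distTriang _ hT')
      (h' - h) (by exact hd)
    have hu0 : u = 0 := by
      apply w.orth m L (R'⟦(-1 : ℤ)⟧) hL
      have := w.shift_ge (l + 1) (-1) R' hR'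
      have hl' : l + 1 + -1 = l := by ring
      rw [hl'] at this
      exact w.ge_anti (m + 1) l (by omega) this
    rw [hu0, zero_comp] at hu
    exact sub_eq_zero.mp hu
  subst hL1
  -- Uniqueness of the second component.
  have hR1 : j' = j := by
    have hd : b ≫ (j' - j) = 0 := by
      rw [Preadditive.comp_sub, e₂, hj₁]; simp
    obtain ⟨u, hu⟩ := Triangle.yoneda_exact₃ _ hT (j' - j) hd
    have hu0 : u = 0 := by
      apply w.orth l (L⟦(1 : ℤ)⟧) R' _ hR'
      have := w.shift_le m 1 L hL
      exact w.le_mono (m + 1) l (by omega) this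
    rw [hu0, comp_zero] at hu
    exact sub_eq_zero.mp hu
  subst hR1
  rfl
end

section
/- Let B be an additive category and M, N objects of the homotopy category of complexes K(B). If m₁, m₂ : M → N are chain maps that are weakly homotopic (i.e., m₁ - m₂ = d_N ∘ x + y ∘ d_M for some collections of maps x^i : M^i → N^{i-1} and y^i : M^i → N^{i-1}, where the collections x and y need not be equal), then for any additive functor A : B → Ab to abelian groups, m₁ and m₂ induce equal maps on the homology of the complexes A(M^•) → A(N^•) in every degree. -/
open CategoryTheory CategoryTheory.Limits

/-- Chain maps `m₁ m₂ : M ⟶ N` of cochain complexes are weakly homotopic if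
`m₁ - m₂ = d_N ∘ x + y ∘ d_M` for some collections of morphisms `x^i, y^i : M^i ⟶ N^{i-1}`
(with `x` and `y` independent of each other). -/
def WeaklyHomotopic {B : Type*} [Category B] [Preadditive B]
    {M N : CochainComplex B ℤ} (m₁ m₂ : M ⟶ N) : Prop :=
  ∃ x y : ∀ i j : ℤ, M.X i ⟶ N.X j,
    ∀ i : ℤ, m₁.f i - m₂.f i = x i (i - 1) ≫ N.d (i - 1) i + M.d i (i + 1) ≫ y (i + 1) i

/-- Weakly homotopic chain maps induce equal maps on the homology of the complexes obtained
by applying any additive functor `A : B ⥤ Ab` termwise. -/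
theorem weakly_homotopic_induce_equal_homology_maps {B : Type*} [Category B] [Preadditive B]
    {M N : CochainComplex B ℤ} (m₁ m₂ : M ⟶ N) (hw : WeaklyHomotopic m₁ m₂)
    (A : B ⥤ AddCommGrpCat) [A.Additive] (i : ℤ) :
    HomologicalComplex.homologyMap
        ((A.mapHomologicalComplex (ComplexShape.up ℤ)).map m₁) i =
      HomologicalComplex.homologyMap
        ((A.mapHomologicalComplex (ComplexShape.up ℤ)).map m₂) i := by
  obtain ⟨x, y, h⟩ := hw
  let F := A.mapHomologicalComplex (ComplexShape.up ℤ)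
  let K : HomologicalComplex AddCommGrpCat (ComplexShape.up ℤ) := F.obj M
  let L : HomologicalComplex AddCommGrpCat (ComplexShape.up ℤ) := F.obj N
  let φ : K ⟶ L := F.map m₁ - F.map m₂
  have h3 : K.d i (i + 1) = A.map (M.d i (i + 1)) := rfl
  have h4 : L.d (i - 1) i = A.map (N.d (i - 1) i) := rfl
  have hf : φ.f i = A.map (x i (i - 1)) ≫ A.map (N.d (i - 1) i)
      + A.map (M.d i (i + 1)) ≫ A.map (y (i + 1) i) := by
    have h1 : φ.f i = A.map (m₁.f i) - A.map (m₂.f i) := rfl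
    have h2 : (A.map (m₁.f i) : A.obj (M.X i) ⟶ A.obj (N.X i)) - A.map (m₂.f i)
        = A.map (m₁.f i - m₂.f i) := (A.map_sub).symm
    rw [h1, h2, h i, A.map_add, A.map_comp, A.map_comp]
  let X : K.X i ⟶ L.X (i - 1) := A.map (x i (i - 1))
  let Y : K.X (i + 1) ⟶ L.X i := A.map (y (i + 1) i)
  replace hf : φ.f i = X ≫ L.d (i - 1) i + K.d i (i + 1) ≫ Y := hf
  have key : HomologicalComplex.homologyMap φ i = 0 := by
    rw [← cancel_epi (K.homologyπ i), HomologicalComplex.homologyπ_naturality, comp_zero]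
    have hc : HomologicalComplex.cyclesMap φ i =
        (K.iCycles i ≫ X) ≫ L.toCycles (i - 1) i := by
      rw [← cancel_mono (L.iCycles i), HomologicalComplex.cyclesMap_i, Category.assoc,
        HomologicalComplex.toCycles_i, hf, Preadditive.comp_add,
        ← Category.assoc (K.iCycles i) (K.d i (i + 1)), K.iCycles_d, zero_comp, add_zero,
        Category.assoc]
    rw [hc, Category.assoc, HomologicalComplex.toCycles_comp_homologyπ, comp_zero]
  rw [HomologicalComplex.homologyMap_sub, sub_eq_zero] at key
  exact key
end

section
/- Let B be an additive category, and let g : M → M' and g' : M' → M'' be chain maps between complexes over B, each weakly homotopic to zero. Then the composition g' ∘ g is null-homotopic, i.e., equals zero in the homotopy category K(B). -/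
open CategoryTheory CategoryTheory.Limits

/-- The composition of two chain maps, each weakly homotopic to zero, is null-homotopic,
i.e. vanishes in the homotopy category `K(B)`. -/
theorem comp_of_weakly_null_is_null_homotopic {B : Type*} [Category B] [Preadditive B]
    {M M' M'' : CochainComplex B ℤ} (g : M ⟶ M') (g' : M' ⟶ M'')
    (h : WeaklyHomotopic g 0) (h' : WeaklyHomotopic g' 0) :
    (HomotopyCategory.quotient B (ComplexShape.up ℤ)).map (g ≫ g') = 0 := by
  obtain ⟨x, y, hx⟩ := h
  obtain ⟨x', y', hx'⟩ := h'
  simp only [sub_zero, HomologicalComplex.zero_f_apply] at hx hx'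
  have H : Homotopy (g ≫ g') 0 := by
    refine
      { hom := fun i j =>
          if hij : j + 1 = i then
            g.f i ≫ x' i j + x i j ≫ M'.d j i ≫ (y' i j - x' i j)
          else 0
        zero := fun i j hij => dif_neg hij
        comm := fun i => ?_ }
    rw [dNext_eq _ (show (ComplexShape.up ℤ).Rel i (i + 1) by simp),
        prevD_eq _ (show (ComplexShape.up ℤ).Rel (i - 1) i by simp)]
    rw [dif_pos rfl, dif_pos (by omega : i - 1 + 1 = i)]
    -- key fact B : g.f i ≫ M'.d i (i+1) = M.d i (i+1) ≫ x (i+1) i ≫ M'.d i (i+1)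
    have hB : g.f i ≫ M'.d i (i + 1) = M.d i (i + 1) ≫ x (i + 1) i ≫ M'.d i (i + 1) := by
      have e := hx (i + 1)
      rw [show i + 1 - 1 = i by omega] at e
      rw [g.comm i (i + 1), e]
      simp [HomologicalComplex.d_comp_d_assoc]
    -- key fact C : M'.d (i-1) i ≫ (y' i (i-1) - x' i (i-1)) ≫ M''.d (i-1) i = 0
    have hC : M'.d (i - 1) i ≫ (y' i (i - 1) - x' i (i - 1)) ≫ M''.d (i - 1) i = 0 := by
      have hcomm := g'.comm (i - 1) i
      have e2 := hx' i
      have e2' := hx' (i - 1)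
      rw [show i - 1 + 1 = i by omega] at e2'
      rw [e2, e2'] at hcomm
      simp only [Preadditive.add_comp, Preadditive.comp_add, Category.assoc,
        HomologicalComplex.d_comp_d, HomologicalComplex.d_comp_d_assoc,
        comp_zero, zero_comp, zero_add, add_zero] at hcomm
      simp only [Preadditive.sub_comp, Preadditive.comp_sub]
      rw [sub_eq_zero]
      exact hcomm
    have hC' : x i (i - 1) ≫ M'.d (i - 1) i ≫ (y' i (i - 1) - x' i (i - 1)) ≫ M''.d (i - 1) i
        = 0 := by rw [hC, comp_zero]
    simp only [HomologicalComplex.comp_f, add_zero, Preadditive.comp_add,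
      Preadditive.add_comp, Category.assoc]
    rw [hC', add_zero]
    rw [← HomologicalComplex.Hom.comm_assoc g i (i + 1) (x' (i + 1) i)]
    rw [← reassoc_of% hB]
    rw [hx' i]
    simp only [Preadditive.comp_add, Preadditive.comp_sub, Category.assoc,
      HomologicalComplex.zero_f_apply, add_zero]
    abel
  rw [HomotopyCategory.eq_of_homotopy _ _ H]
  exact (HomotopyCategory.quotient B (ComplexShape.up ℤ)).map_zero _ _
end

section
/- Let B be an additive category and let Kw(B) be the quotient of the homotopy category K(B) obtained by identifying weakly homotopic morphisms. Then the projection functor K(B) → Kw(B) is conservative: a morphism in K(B) that becomes an isomorphism in Kw(B) is already an isomorphism in K(B). -/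
open CategoryTheory CategoryTheory.Limits

/-- The composition of two endomorphisms each weakly homotopic to zero is null-homotopic. -/
theorem quotient_map_comp_eq_zero {B : Type*} [Category B] [Preadditive B]
    {M : CochainComplex B ℤ} (f g : M ⟶ M)
    (hf : WeaklyHomotopic f (0 : M ⟶ M)) (hg : WeaklyHomotopic g (0 : M ⟶ M)) :
    (HomotopyCategory.quotient B (ComplexShape.up ℤ)).map (f ≫ g) = 0 := by
  obtain ⟨x, y, hxy⟩ := hf
  obtain ⟨x', y', hxy'⟩ := hg
  simp only [HomologicalComplex.zero_f, sub_zero] at hxy hxy'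
  -- the "star" relations coming from `f` and `g` being chain maps
  have star : ∀ i : ℤ, M.d i (i + 1) ≫ y (i + 1) i ≫ M.d i (i + 1)
      = M.d i (i + 1) ≫ x (i + 1) i ≫ M.d i (i + 1) := by
    intro i
    have hcomm := f.comm i (i + 1)
    rw [hxy i, hxy (i + 1), show (i : ℤ) + 1 - 1 = i from by omega] at hcomm
    simp only [Preadditive.add_comp, Preadditive.comp_add,
      Category.assoc, HomologicalComplex.d_comp_d, HomologicalComplex.d_comp_d_assoc,
      Limits.comp_zero, Limits.zero_comp, add_zero, zero_add] at hcomm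
    exact hcomm
  have star' : ∀ i : ℤ, M.d i (i + 1) ≫ y' (i + 1) i ≫ M.d i (i + 1)
      = M.d i (i + 1) ≫ x' (i + 1) i ≫ M.d i (i + 1) := by
    intro i
    have hcomm := g.comm i (i + 1)
    rw [hxy' i, hxy' (i + 1), show (i : ℤ) + 1 - 1 = i from by omega] at hcomm
    simp only [Preadditive.add_comp, Preadditive.comp_add,
      Category.assoc, HomologicalComplex.d_comp_d, HomologicalComplex.d_comp_d_assoc,
      Limits.comp_zero, Limits.zero_comp, add_zero, zero_add] at hcomm
    exact hcomm
  have ht : Homotopy (f ≫ g) 0 := by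
    refine ⟨fun i j =>
        if h : j + 1 = i then
          x i j ≫ M.d j i ≫ y' i j + y i j ≫ x' j (j - 1) ≫ M.d (j - 1) j
        else 0,
      fun i j h => dif_neg h, fun i => ?_⟩
    have hrel₁ : (ComplexShape.up ℤ).Rel i (i + 1) := by simp
    have hrel₂ : (ComplexShape.up ℤ).Rel (i - 1) i := by simp
    rw [dNext_eq _ hrel₁, prevD_eq _ hrel₂, dif_pos rfl,
      dif_pos (show (i : ℤ) - 1 + 1 = i from by omega)]
    have hstar' : M.d (i - 1) i ≫ y' i (i - 1) ≫ M.d (i - 1) i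
        = M.d (i - 1) i ≫ x' i (i - 1) ≫ M.d (i - 1) i := by
      have h := star' (i - 1)
      rw [show (i : ℤ) - 1 + 1 = i from by omega] at h
      exact h
    have hL : (f ≫ g).f i = f.f i ≫ g.f i := rfl
    rw [hL, hxy i, hxy' i]
    simp only [Preadditive.add_comp, Preadditive.comp_add, Category.assoc,
      HomologicalComplex.d_comp_d, HomologicalComplex.d_comp_d_assoc,
      Limits.comp_zero, Limits.zero_comp, add_zero, zero_add,
      HomologicalComplex.zero_f]
    rw [reassoc_of% (star i), hstar']
    abel
  rw [HomotopyCategory.eq_of_homotopy _ _ ht, Functor.map_zero]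

/-- The projection functor `K(B) → Kw(B)` is conservative: if a chain map `m` admits an inverse
up to weak homotopy (i.e. becomes an isomorphism in the quotient `Kw(B)` of `K(B)` by the weak
homotopy relation), then `m` is already an isomorphism in the homotopy category `K(B)`. -/
theorem weak_homotopy_projection_conservative {B : Type*} [Category B] [Preadditive B]
    {M N : CochainComplex B ℤ} (m : M ⟶ N) (n : N ⟶ M)
    (h₁ : WeaklyHomotopic (m ≫ n) (𝟙 M)) (h₂ : WeaklyHomotopic (n ≫ m) (𝟙 N)) :
    IsIso ((HomotopyCategory.quotient B (ComplexShape.up ℤ)).map m) := by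
  set Q := HomotopyCategory.quotient B (ComplexShape.up ℤ) with hQ
  set f : M ⟶ M := m ≫ n - 𝟙 M with hfdef
  set g : N ⟶ N := n ≫ m - 𝟙 N with hgdef
  have hf : WeaklyHomotopic f (0 : M ⟶ M) := by
    obtain ⟨x, y, h⟩ := h₁
    exact ⟨x, y, fun i => by simpa [hfdef] using h i⟩
  have hg : WeaklyHomotopic g (0 : N ⟶ N) := by
    obtain ⟨x, y, h⟩ := h₂
    exact ⟨x, y, fun i => by simpa [hgdef] using h i⟩
  have hff : Q.map f ≫ Q.map f = 0 := by
    rw [← Q.map_comp, quotient_map_comp_eq_zero f f hf hf]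
  have hgg : Q.map g ≫ Q.map g = 0 := by
    rw [← Q.map_comp, quotient_map_comp_eq_zero g g hg hg]
  have hmn : Q.map m ≫ Q.map n = 𝟙 (Q.obj M) + Q.map f := by
    rw [← Q.map_comp]
    have : m ≫ n = 𝟙 M + f := by rw [hfdef]; abel
    rw [this, Q.map_add, Q.map_id]
  have hnm : Q.map n ≫ Q.map m = 𝟙 (Q.obj N) + Q.map g := by
    rw [← Q.map_comp]
    have : n ≫ m = 𝟙 N + g := by rw [hgdef]; abel
    rw [this, Q.map_add, Q.map_id]
  -- right inverse of `Q.map m`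
  set r : Q.obj N ⟶ Q.obj M := Q.map n ≫ (𝟙 (Q.obj M) - Q.map f) with hr
  have hright : Q.map m ≫ r = 𝟙 (Q.obj M) := by
    rw [hr, ← Category.assoc, hmn]
    simp only [Preadditive.add_comp, Preadditive.comp_sub, Preadditive.sub_comp,
      Category.comp_id, Category.id_comp]
    rw [hff]
    abel
  -- left inverse of `Q.map m`
  set l : Q.obj N ⟶ Q.obj M := (𝟙 (Q.obj N) - Q.map g) ≫ Q.map n with hl
  have hleft : l ≫ Q.map m = 𝟙 (Q.obj N) := by
    rw [hl, Category.assoc, hnm]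
    simp only [Preadditive.sub_comp, Preadditive.comp_add,
      Category.comp_id, Category.id_comp]
    rw [hgg]
    abel
  have hlr : l = r := by
    calc l = l ≫ (Q.map m ≫ r) := by rw [hright, Category.comp_id]
    _ = (l ≫ Q.map m) ≫ r := (Category.assoc _ _ _).symm
    _ = r := by rw [hleft, Category.id_comp]
  exact ⟨r, hright, by rw [← hlr, hleft]⟩
end

section
/- Let F : C → C' be a full additive functor between additive categories such that the composition of any two composable morphisms killed by F is zero. Then F is conservative: if F(g) is an isomorphism, then g is an isomorphism. -/
open CategoryTheory

/-- A full additive functor `F` such that the composition of any two composable morphisms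
killed by `F` is zero is conservative. -/
theorem full_functor_conservative_of_square_zero {C : Type*} {C' : Type*}
    [Category C] [Category C'] [Preadditive C] [Preadditive C']
    (F : C ⥤ C') [F.Additive] [F.Full]
    (hkill : ∀ {X Y Z : C} (f : X ⟶ Y) (g : Y ⟶ Z), F.map f = 0 → F.map g = 0 → f ≫ g = 0)
    {X Y : C} (g : X ⟶ Y) (hg : IsIso (F.map g)) : IsIso g := by
  obtain ⟨h, hh⟩ := F.map_surjective (inv (F.map g))
  have key : ∀ {Z : C} (a : Z ⟶ Z), F.map a = 𝟙 (F.obj Z) → IsIso a := by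
    intro Z a ha
    have h0 : F.map (𝟙 Z - a) = 0 := by
      simp [F.map_sub, ha]
    have hsq : (𝟙 Z - a) ≫ (𝟙 Z - a) = 0 := hkill _ _ h0 h0
    have eq1 : 𝟙 Z - a = a - a ≫ a := by
      have := hsq
      simp only [Preadditive.sub_comp, Preadditive.comp_sub, Category.comp_id,
        Category.id_comp] at this
      rwa [sub_eq_zero] at this
    have e : a ≫ a = a + a - 𝟙 Z := by
      have h2 : a ≫ a - (a + a - 𝟙 Z) = (𝟙 Z - a) - (a - a ≫ a) := by abel
      rw [eq1, sub_self, sub_eq_zero] at h2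
      exact h2
    have hsq' : a ≫ (2 • 𝟙 Z - a) = 𝟙 Z := by
      rw [Preadditive.comp_sub, two_smul, Preadditive.comp_add, Category.comp_id, e]
      abel
    have hsq'' : (2 • 𝟙 Z - a) ≫ a = 𝟙 Z := by
      have : (2 • 𝟙 Z - a) ≫ a = a ≫ (2 • 𝟙 Z - a) := by
        simp [Preadditive.sub_comp, Preadditive.comp_sub]
      rw [this, hsq']
    exact ⟨2 • 𝟙 Z - a, hsq', hsq''⟩
  have ha : IsIso (g ≫ h) := key _ (by simp [hh])
  have hb : IsIso (h ≫ g) := key _ (by simp [hh])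
  refine ⟨h ≫ inv (g ≫ h), by rw [← Category.assoc]; exact IsIso.hom_inv_id _, ?_⟩
  have hc : (h ≫ g) ≫ (h ≫ inv (g ≫ h)) ≫ g = (h ≫ g) ≫ 𝟙 Y := by
    simp only [Category.assoc, Category.comp_id]
    rw [← Category.assoc g h, IsIso.hom_inv_id_assoc]
  exact (cancel_epi (h ≫ g)).mp hc
end

section
/- Let w be a smashing weight structure on a triangulated category C closed under small coproducts, and let (Y_i)_{i≥0} be a sequence of objects with maps φ_i : Y_i → Y_{i+1} such that Y_i ∈ C_{w≤-i} for all i ≥ 0. Then the homotopy colimit Y = hocolim Y_i (the cone of id − shift on ⨁ Y_i) is right w-degenerate, i.e., Y ∈ C_{w≤j} for every j ∈ ℤ. -/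
open CategoryTheory CategoryTheory.Limits CategoryTheory.Pretriangulated

universe v u

variable (C : Type u) [Category.{v} C] [Preadditive C] [HasZeroObject C]
  [HasShift C ℤ] [∀ n : ℤ, (CategoryTheory.shiftFunctor C n).Additive] [Pretriangulated C]

/-- Auxiliary "partial sum" morphisms used to solve `h'ᵢ - φᵢ⟦1⟧ ≫ h'ᵢ₊₁ = gᵢ` by downward
recursion with fuel. -/
def hocolimHAux {D : Type u} [Category.{v} D] [Preadditive D] [HasShift D ℤ]
    (Y : ℕ → D) (φ : ∀ i : ℕ, Y i ⟶ Y (i + 1)) {W : D}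
    (g : ∀ i : ℕ, (Y i)⟦(1 : ℤ)⟧ ⟶ W) : ℕ → ∀ i : ℕ, (Y i)⟦(1 : ℤ)⟧ ⟶ W
  | 0, _ => 0
  | n + 1, i => g i + (shiftFunctor D (1 : ℤ)).map (φ i) ≫ hocolimHAux Y φ g n (i + 1)

/-- If `w` is smashing and `Y_i ∈ C_{w≤-i}` for all `i ≥ 0`, then the countable homotopy colimit
of the sequence `Y_0 → Y_1 → ⋯` (any cone of `⊕id − ⊕φ : ∐Y → ∐Y`) is right `w`-degenerate. -/
theorem hocolim_right_degenerate [HasCoproducts.{0} C] (w : WeightStructure C)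
    (hsmash : ∀ (n : ℤ) (ι : Type) (f : ι → C), (∀ i, f i ∈ w.ge n) → (∐ f) ∈ w.ge n)
    (Y : ℕ → C) (φ : ∀ i : ℕ, Y i ⟶ Y (i + 1))
    (hY : ∀ i : ℕ, Y i ∈ w.le (-(i : ℤ)))
    (Z : C) (b : (∐ Y) ⟶ Z) (c : Z ⟶ (∐ Y)⟦(1 : ℤ)⟧)
    (hT : Triangle.mk (Sigma.desc fun i => Sigma.ι Y i - φ i ≫ Sigma.ι Y (i + 1)) b c
      ∈ distTriang C)
    (j : ℤ) : Z ∈ w.le j := by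
  set d : (∐ Y) ⟶ (∐ Y) := Sigma.desc fun i => Sigma.ι Y i - φ i ≫ Sigma.ι Y (i + 1) with hd
  -- Main claim: every morphism from `Z` to an object of `C_{w ≥ j+1}` vanishes.
  have key : ∀ (W : C), W ∈ w.ge (j + 1) → ∀ f : Z ⟶ W, f = 0 := by
    intro W hW f
    set N : ℕ := (1 - j).toNat with hN
    have hNle : ∀ m : ℕ, N ≤ m → (1 - j : ℤ) ≤ (m : ℤ) := fun m hm =>
      le_trans (Int.self_le_toNat _) (by exact_mod_cast hm)
    -- vanishing of maps out of `Y m` and `(Y m)⟦1⟧` for `m ≥ N`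
    have hzero1 : ∀ m : ℕ, N ≤ m → ∀ u : Y m ⟶ W, u = 0 := by
      intro m hm u
      refine w.orth j _ _ (w.le_mono _ _ ?_ (hY m)) hW u
      have := hNle m hm; omega
    have hzero2 : ∀ m : ℕ, N ≤ m → ∀ u : (Y m)⟦(1 : ℤ)⟧ ⟶ W, u = 0 := by
      intro m hm u
      refine w.orth j _ _ (w.le_mono (-(m : ℤ) + 1) _ ?_ (w.shift_le _ 1 _ (hY m))) hW u
      have := hNle m hm; omega
    -- Step 1: `b ≫ f = 0`.
    have hdb : d ≫ b = 0 := comp_distTriang_mor_zero₁₂ _ hT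
    have hrec : ∀ i : ℕ, Sigma.ι Y i ≫ b ≫ f = φ i ≫ Sigma.ι Y (i + 1) ≫ b ≫ f := by
      intro i
      have h0 : Sigma.ι Y i ≫ d ≫ b ≫ f = 0 := by
        have : Sigma.ι Y i ≫ (d ≫ b) ≫ f = 0 := by rw [hdb, zero_comp, comp_zero]
        simpa using this
      have h1 : Sigma.ι Y i ≫ d = Sigma.ι Y i - φ i ≫ Sigma.ι Y (i + 1) := by
        simp [hd]
      rw [← sub_eq_zero]
      calc Sigma.ι Y i ≫ b ≫ f - φ i ≫ Sigma.ι Y (i + 1) ≫ b ≫ f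
          = (Sigma.ι Y i - φ i ≫ Sigma.ι Y (i + 1)) ≫ b ≫ f := by
            rw [Preadditive.sub_comp, Category.assoc]
        _ = Sigma.ι Y i ≫ d ≫ b ≫ f := by rw [← h1, Category.assoc]
        _ = 0 := h0
    have hg0 : ∀ m i : ℕ, N ≤ i + m → Sigma.ι Y i ≫ b ≫ f = 0 := by
      intro m
      induction m with
      | zero => intro i hi; exact hzero1 i (by omega) _
      | succ m ih =>
        intro i hi
        by_cases h : N ≤ i + m
        · exact ih i h
        · rw [hrec i, ih (i + 1) (by omega), comp_zero]
    have hbf : b ≫ f = 0 := by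
      apply Sigma.hom_ext
      intro i
      rw [comp_zero]
      exact hg0 N i (by omega)
    -- Step 2: `f` factors through `c`.
    obtain ⟨h, hh⟩ := Triangle.yoneda_exact₃ _ hT f hbf
    -- Step 3: build a preimage of `h` under precomposition with `d⟦1⟧`.
    set hm : ∀ i : ℕ, (Y i)⟦(1 : ℤ)⟧ ⟶ W := fun i =>
      (shiftFunctor C (1 : ℤ)).map (Sigma.ι Y i) ≫ h with hhm
    have hrel : ∀ i : ℕ,
        hm i = hocolimHAux Y φ hm (N - i) i -
          (shiftFunctor C (1 : ℤ)).map (φ i) ≫ hocolimHAux Y φ hm (N - (i + 1)) (i + 1) := by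
      intro i
      by_cases hcase : N ≤ i
      · have e1 : N - i = 0 := by omega
        have e2 : N - (i + 1) = 0 := by omega
        rw [e1, e2]
        simp only [hocolimHAux, comp_zero, sub_zero]
        exact hzero2 i hcase _
      · have e1 : N - i = (N - (i + 1)) + 1 := by omega
        rw [e1]
        show hm i = (hm i + (shiftFunctor C (1 : ℤ)).map (φ i) ≫ hocolimHAux Y φ hm (N - (i+1)) (i + 1))
            - (shiftFunctor C (1 : ℤ)).map (φ i) ≫ hocolimHAux Y φ hm (N - (i + 1)) (i + 1)
        abel
    -- assemble `h'` into a morphism `(∐ Y)⟦1⟧ ⟶ W`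
    have hcolim : IsColimit ((shiftFunctor C (1 : ℤ)).mapCocone
        (colimit.cocone (Discrete.functor Y))) :=
      isColimitOfPreserves _ (colimit.isColimit _)
    let K : Cocone (Discrete.functor Y ⋙ shiftFunctor C (1 : ℤ)) :=
      { pt := W, ι := Discrete.natTrans (fun i => hocolimHAux Y φ hm (N - i.as) i.as) }
    set H : (∐ Y)⟦(1 : ℤ)⟧ ⟶ W := hcolim.desc K with hH
    have hfac : ∀ i : ℕ, (shiftFunctor C (1 : ℤ)).map (Sigma.ι Y i) ≫ H =
        hocolimHAux Y φ hm (N - i) i :=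
      fun i => hcolim.fac K ⟨i⟩
    -- Step 4: `h = d⟦1⟧ ≫ H`
    have hfact : h = (shiftFunctor C (1 : ℤ)).map d ≫ H := by
      apply hcolim.hom_ext
      rintro ⟨i⟩
      show (shiftFunctor C (1 : ℤ)).map (Sigma.ι Y i) ≫ h =
        (shiftFunctor C (1 : ℤ)).map (Sigma.ι Y i) ≫ (shiftFunctor C (1 : ℤ)).map d ≫ H
      rw [← Category.assoc, ← Functor.map_comp]
      have h1 : Sigma.ι Y i ≫ d = Sigma.ι Y i - φ i ≫ Sigma.ι Y (i + 1) := by simp [hd]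
      rw [h1, Functor.map_sub, Functor.map_comp, Preadditive.sub_comp, Category.assoc,
        hfac, hfac]
      exact hrel i
    -- Step 5: conclude `f = 0` since `c ≫ d⟦1⟧ = 0`.
    have hcd : c ≫ (shiftFunctor C (1 : ℤ)).map d = 0 := comp_distTriang_mor_zero₃₁ _ hT
    have hmor : (Triangle.mk d b c).mor₃ = c := rfl
    rw [hh, hfact]
    show c ≫ (shiftFunctor C (1 : ℤ)).map d ≫ H = 0
    rw [← Category.assoc, hcd, zero_comp]
  -- Use a weight decomposition of `Z` at `j` and the retract axiom.
  obtain ⟨A, B, a, g', e, hTri, hA, hB⟩ := w.decomp Z j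
  have hg' : g' = 0 := key B hB g'
  obtain ⟨s, hs⟩ := Triangle.coyoneda_exact₂ _ hTri (𝟙 Z)
    (by show 𝟙 Z ≫ g' = 0; rw [hg', comp_zero])
  exact w.retract_le j A Z s a hs.symm hA
end

section
/- Let C be a triangulated category densely generated by a connective additive subcategory B (i.e., C equals the smallest retraction-closed full triangulated subcategory containing B). Then there exists exactly one weight structure w on C whose heart contains B; this w is bounded, its heart is the retraction-closure of B in C, and C_{w≥0} (resp. C_{w≤0}) is the smallest class of objects containing B[i] for all i ≥ 0 (resp. i ≤ 0) that is extension-closed and retraction-closed in C. -/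
open CategoryTheory CategoryTheory.Limits CategoryTheory.Pretriangulated

universe v u

variable (C : Type u) [Category.{v} C] [Preadditive C] [HasZeroObject C]
  [HasShift C ℤ] [∀ n : ℤ, (CategoryTheory.shiftFunctor C n).Additive] [Pretriangulated C]

/-- A class of objects is extension-closed if for every distinguished triangle `A → B → Z → A[1]`
with `A` and `Z` in the class, `B` is in the class. -/
def ExtensionClosed (S : Set C) : Prop :=
  ∀ ⦃A B Z : C⦄ (f : A ⟶ B) (g : B ⟶ Z) (h : Z ⟶ A⟦(1 : ℤ)⟧),
    (Triangle.mk f g h ∈ distTriang C) → A ∈ S → Z ∈ S → B ∈ S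

/-- A class of objects is retraction-closed if it contains all retracts of its members. -/
def RetractionClosed (S : Set C) : Prop :=
  ∀ (X Y : C) (i : Y ⟶ X) (r : X ⟶ Y), i ≫ r = 𝟙 Y → X ∈ S → Y ∈ S

/-- A class of objects is thick (the object class of a retraction-closed full triangulated
subcategory) if it contains the zero objects and is closed under shifts, extensions and
retracts. -/
def ThickClass (S : Set C) : Prop :=
  (∀ X : C, IsZero X → X ∈ S) ∧ (∀ (i : ℤ), ∀ X ∈ S, X⟦i⟧ ∈ S) ∧
    ExtensionClosed C S ∧ RetractionClosed C S


open ZeroObject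

set_option linter.unusedSectionVars false
set_option linter.unusedVariables false
set_option maxHeartbeats 1000000
namespace WSAux

variable {C}

/-- extension closed (local copy matching the pinned def) -/
def EC (S : Set C) : Prop :=
  ∀ ⦃A B Z : C⦄ (f : A ⟶ B) (g : B ⟶ Z) (h : Z ⟶ A⟦(1 : ℤ)⟧),
    (Triangle.mk f g h ∈ distTriang C) → A ∈ S → Z ∈ S → B ∈ S

def RC (S : Set C) : Prop :=
  ∀ (X Y : C) (i : Y ⟶ X) (r : X ⟶ Y), i ≫ r = 𝟙 Y → X ∈ S → Y ∈ S

lemma ec_triangle {S : Set C} (hS : EC S) {T : Triangle C} (hT : T ∈ distTriang C)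
    (h1 : T.obj₁ ∈ S) (h3 : T.obj₃ ∈ S) : T.obj₂ ∈ S :=
  hS T.mor₁ T.mor₂ T.mor₃ hT h1 h3

/-- shifting a zero object gives a zero object -/
lemma isZero_shift {X : C} (h : IsZero X) (i : ℤ) : IsZero (X⟦i⟧) := by
  rw [IsZero.iff_id_eq_zero] at h ⊢
  rw [← (shiftFunctor C i).map_id, h, Functor.map_zero]

lemma shift_hom_zero_of {X Y : C} (i : ℤ) (f : X⟦i⟧ ⟶ Y⟦i⟧)
    (h : ∀ g : X ⟶ Y, g = 0) : f = 0 := by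
  have : f = (shiftFunctor C i).map ((shiftFunctor C i).preimage f) := by simp
  rw [this, h ((shiftFunctor C i).preimage f), Functor.map_zero]

lemma shift_hom_zero_iff {X Y : C} (i : ℤ) (f : X ⟶ Y) :
    (shiftFunctor C i).map f = 0 ↔ f = 0 := by
  constructor
  · intro h
    apply (shiftFunctor C i).map_injective
    simpa using h
  · intro h; rw [h, Functor.map_zero]

/-- if all maps `X⟦j-i... ` helper : maps out of a negative shift -/
lemma hom_zero_shift_transfer {X Y : C} (i : ℤ)
    (h : ∀ g : X ⟶ Y⟦-i⟧, g = 0) (f : X⟦i⟧ ⟶ Y) : f = 0 := by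
  have h2 : (shiftShiftNeg X i).inv ≫ (shiftFunctor C (-i)).map f = 0 := by
    rw [h ((shiftShiftNeg X i).inv ≫ (shiftFunctor C (-i)).map f)]
  have h3 : (shiftFunctor C (-i)).map f = 0 := by
    rw [← cancel_epi (shiftShiftNeg X i).inv, comp_zero, h2]
  apply (shiftFunctor C (-i)).map_injective
  simpa using h3

lemma hom_zero_shift_transfer' {X Y : C} (i : ℤ)
    (h : ∀ g : X⟦i⟧ ⟶ Y, g = 0) (f : X ⟶ Y⟦-i⟧) : f = 0 := by
  have h2 : (shiftFunctor C i).map f ≫ (shiftNegShift Y i).hom = 0 := h _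
  have h3 : (shiftFunctor C i).map f = 0 := by
    rw [← cancel_mono (shiftNegShift Y i).hom, zero_comp, h2]
  apply (shiftFunctor C i).map_injective
  simpa using h3

variable (P : Set C)

/-- envelope of `P⟦i⟧`, `i ≤ n`, under extensions (no retracts) -/
def LeC (n : ℤ) : Set C :=
  ⋂₀ {S : Set C | (∀ X ∈ P, ∀ i : ℤ, i ≤ n → X⟦i⟧ ∈ S) ∧ EC S}

/-- envelope of `P⟦i⟧`, `i ≤ n`, under extensions and retracts -/
def LeR (n : ℤ) : Set C :=
  ⋂₀ {S : Set C | (∀ X ∈ P, ∀ i : ℤ, i ≤ n → X⟦i⟧ ∈ S) ∧ EC S ∧ RC S}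

/-- envelope of `P⟦i⟧`, `i ≥ n`, under extensions and retracts -/
def GeR (n : ℤ) : Set C :=
  ⋂₀ {S : Set C | (∀ X ∈ P, ∀ i : ℤ, n ≤ i → X⟦i⟧ ∈ S) ∧ EC S ∧ RC S}

/-- right orthogonal of `LeC n` -/
def Rc (n : ℤ) : Set C := {Y | ∀ T ∈ LeC P n, ∀ f : T ⟶ Y, f = 0}

/-- left orthogonal of `Rc n` -/
def Lhat (n : ℤ) : Set C := {X | ∀ Y ∈ Rc P n, ∀ f : X ⟶ Y, f = 0}

/-- heart in degree `n` : retracts of `W⟦n⟧`, `W ∈ P` -/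
def Heart (n : ℤ) : Set C :=
  {X | ∃ W ∈ P, ∃ (i : X ⟶ W⟦n⟧) (r : W⟦n⟧ ⟶ X), i ≫ r = 𝟙 X}

variable {P}

lemma leC_gen {Q : C} (hQ : Q ∈ P) {i n : ℤ} (h : i ≤ n) : Q⟦i⟧ ∈ LeC P n :=
  fun _ hS => hS.1 Q hQ i h

lemma leC_ec (n : ℤ) : EC (LeC P n) := by
  intro A B Z f g h hT hA hZ S hS
  exact hS.2 f g h hT (hA S hS) (hZ S hS)

lemma leC_self_mem (n : ℤ) :
    (LeC P n) ∈ {S : Set C | (∀ X ∈ P, ∀ i : ℤ, i ≤ n → X⟦i⟧ ∈ S) ∧ EC S} :=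
  ⟨fun Q hQ i hi => leC_gen hQ hi, leC_ec n⟩

lemma leR_gen {Q : C} (hQ : Q ∈ P) {i n : ℤ} (h : i ≤ n) : Q⟦i⟧ ∈ LeR P n :=
  fun _ hS => hS.1 Q hQ i h

lemma leR_ec (n : ℤ) : EC (LeR P n) := by
  intro A B Z f g h hT hA hZ S hS
  exact hS.2.1 f g h hT (hA S hS) (hZ S hS)

lemma leR_rc (n : ℤ) : RC (LeR P n) := by
  intro X Y i r hir hX S hS
  exact hS.2.2 X Y i r hir (hX S hS)

lemma geR_gen {Q : C} (hQ : Q ∈ P) {i n : ℤ} (h : n ≤ i) : Q⟦i⟧ ∈ GeR P n :=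
  fun _ hS => hS.1 Q hQ i h

lemma geR_ec (n : ℤ) : EC (GeR P n) := by
  intro A B Z f g h hT hA hZ S hS
  exact hS.2.1 f g h hT (hA S hS) (hZ S hS)

lemma geR_rc (n : ℤ) : RC (GeR P n) := by
  intro X Y i r hir hX S hS
  exact hS.2.2 X Y i r hir (hX S hS)

lemma leC_mono {n m : ℤ} (h : n ≤ m) : LeC P n ⊆ LeC P m := by
  intro X hX S hS
  exact hX S ⟨fun Q hQ i hi => hS.1 Q hQ i (hi.trans h), hS.2⟩

lemma leR_mono {n m : ℤ} (h : n ≤ m) : LeR P n ⊆ LeR P m := by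
  intro X hX S hS
  exact hX S ⟨fun Q hQ i hi => hS.1 Q hQ i (hi.trans h), hS.2⟩

lemma geR_anti {n m : ℤ} (h : n ≤ m) : GeR P m ⊆ GeR P n := by
  intro X hX S hS
  exact hX S ⟨fun Q hQ i hi => hS.1 Q hQ i (h.trans hi), hS.2⟩

lemma leC_sub_leR (n : ℤ) : LeC P n ⊆ LeR P n := by
  intro X hX S hS
  exact hX S ⟨hS.1, hS.2.1⟩

section ZeroIso

/-- any extension-closed class containing some zero object contains all zero objects -/
lemma zero_mem_of_ec {S : Set C} (hS : EC S) {Q : C} (hQ : Q ∈ S) (hQz : IsZero Q)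
    {Z : C} (hZ : IsZero Z) : Z ∈ S := by
  have hT : Triangle.mk (0 : Q ⟶ Z) (0 : Z ⟶ Q) (0 : Q ⟶ Q⟦(1:ℤ)⟧) ∈ distTriang C := by
    refine isomorphic_distinguished _ (contractible_distinguished (0 : C)) _ ?_
    have h0 : IsZero (0 : C) := isZero_zero C
    refine Triangle.isoMk _ _ (hQz.iso h0) (hZ.iso h0) (hQz.iso h0)
      ?_ ?_ ?_
    · apply h0.eq_of_tgt
    · apply h0.eq_of_tgt
    · apply (isZero_shift h0 1).eq_of_tgt
  exact hS _ _ _ hT hQ hQ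

lemma iso_mem_of_ec {S : Set C} (hS : EC S) (hz : ∀ Z : C, IsZero Z → Z ∈ S)
    {X Y : C} (hX : X ∈ S) (e : X ≅ Y) : Y ∈ S := by
  have hT : Triangle.mk e.hom (0 : Y ⟶ (0 : C)) (0 : (0:C) ⟶ X⟦(1:ℤ)⟧) ∈ distTriang C := by
    refine isomorphic_distinguished _ (contractible_distinguished X) _ ?_
    exact Triangle.isoMk _ _ (Iso.refl X) e.symm (Iso.refl _)
      (by exact e.hom_inv_id.trans (Category.id_comp _).symm) (by exact zero_comp.trans comp_zero.symm) (by exact zero_comp.trans comp_zero.symm)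
  exact hS _ _ _ hT hX (hz _ (isZero_zero C))

end ZeroIso

section ClassLemmas

variable {n : ℤ}

lemma leC_zero (hzero : ∀ X : C, IsZero X → X ∈ P) {Z : C} (hZ : IsZero Z) (n : ℤ) : Z ∈ LeC P n :=
  zero_mem_of_ec (leC_ec n) (leC_gen (hzero _ (isZero_zero C)) (le_refl n))
    (isZero_shift (isZero_zero C) n) hZ

lemma leR_zero (hzero : ∀ X : C, IsZero X → X ∈ P) {Z : C} (hZ : IsZero Z) (n : ℤ) : Z ∈ LeR P n :=
  zero_mem_of_ec (leR_ec n) (leR_gen (hzero _ (isZero_zero C)) (le_refl n))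
    (isZero_shift (isZero_zero C) n) hZ

lemma geR_zero (hzero : ∀ X : C, IsZero X → X ∈ P) {Z : C} (hZ : IsZero Z) (n : ℤ) : Z ∈ GeR P n :=
  zero_mem_of_ec (geR_ec n) (geR_gen (hzero _ (isZero_zero C)) (le_refl n))
    (isZero_shift (isZero_zero C) n) hZ

lemma leC_iso (hzero : ∀ X : C, IsZero X → X ∈ P) {X Y : C} (hX : X ∈ LeC P n) (e : X ≅ Y) : Y ∈ LeC P n :=
  iso_mem_of_ec (leC_ec n) (fun _ hZ => leC_zero hzero hZ n) hX e

lemma leR_iso {X Y : C} (hX : X ∈ LeR P n) (e : X ≅ Y) : Y ∈ LeR P n :=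
  leR_rc n _ _ e.inv e.hom (by simp) hX

lemma geR_iso {X Y : C} (hX : X ∈ GeR P n) (e : X ≅ Y) : Y ∈ GeR P n :=
  geR_rc n _ _ e.inv e.hom (by simp) hX

lemma shift_triangle_dist {A B Z : C} (f : A ⟶ B) (g : B ⟶ Z) (h : Z ⟶ A⟦(1:ℤ)⟧)
    (hT : Triangle.mk f g h ∈ distTriang C) (i : ℤ) :
    (Triangle.shiftFunctor C i).obj (Triangle.mk f g h) ∈ distTriang C := by
  rw [← Triangle.shiftFunctor_eq]
  exact Triangle.shift_distinguished _ hT i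

lemma leC_shift (hzero : ∀ X : C, IsZero X → X ∈ P) {X : C} {n : ℤ} (hX : X ∈ LeC P n) (i : ℤ) : X⟦i⟧ ∈ LeC P (n + i) := by
  have : X ∈ {X : C | X⟦i⟧ ∈ LeC P (n + i)} := by
    refine hX _ ⟨fun Q hQ j hj => ?_, ?_⟩
    · exact leC_iso hzero (leC_gen hQ (by omega : j + i ≤ n + i))
        ((shiftFunctorAdd C j i).app Q)
    · intro A B Z f g h hT hA hZ
      exact ec_triangle (leC_ec (n+i)) (shift_triangle_dist f g h hT i) hA hZ
  exact this

lemma leR_shift {X : C} {n : ℤ} (hX : X ∈ LeR P n) (i : ℤ) : X⟦i⟧ ∈ LeR P (n + i) := by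
  have : X ∈ {X : C | X⟦i⟧ ∈ LeR P (n + i)} := by
    refine hX _ ⟨fun Q hQ j hj => ?_, ?_, ?_⟩
    · exact leR_iso (leR_gen hQ (by omega : j + i ≤ n + i)) ((shiftFunctorAdd C j i).app Q)
    · intro A B Z f g h hT hA hZ
      exact ec_triangle (leR_ec (n+i)) (shift_triangle_dist f g h hT i) hA hZ
    · intro X Y ii r hir hXm
      exact leR_rc (n+i) _ _ (ii⟦i⟧') (r⟦i⟧')
        (by rw [← Functor.map_comp, hir]; simp) hXm
  exact this

lemma geR_shift {X : C} {n : ℤ} (hX : X ∈ GeR P n) (i : ℤ) : X⟦i⟧ ∈ GeR P (n + i) := by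
  have : X ∈ {X : C | X⟦i⟧ ∈ GeR P (n + i)} := by
    refine hX _ ⟨fun Q hQ j hj => ?_, ?_, ?_⟩
    · exact geR_iso (geR_gen hQ (by omega : n + i ≤ j + i)) ((shiftFunctorAdd C j i).app Q)
    · intro A B Z f g h hT hA hZ
      exact ec_triangle (geR_ec (n+i)) (shift_triangle_dist f g h hT i) hA hZ
    · intro X Y ii r hir hXm
      exact geR_rc (n+i) _ _ (ii⟦i⟧') (r⟦i⟧')
        (by rw [← Functor.map_comp, hir]; simp) hXm
  exact this

end ClassLemmas

section RcLhat

lemma rc_anti {n m : ℤ} (h : n ≤ m) : Rc P m ⊆ Rc P n :=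
  fun _ hY T hT f => hY T (leC_mono h hT) f

lemma rc_ec (n : ℤ) : EC (Rc P n) := by
  intro A B Z f g h hT hA hZ T hTm t
  have h1 : t ≫ g = 0 := hZ T hTm (t ≫ g)
  obtain ⟨t', ht'⟩ := Triangle.coyoneda_exact₂ _ hT t h1
  rw [ht', hA T hTm t']; exact zero_comp

lemma rc_retract (n : ℤ) : RC (Rc P n) := by
  intro X Y i r hir hX T hTm t
  have : t ≫ i = 0 := hX T hTm (t ≫ i)
  have h2 : t = t ≫ (i ≫ r) := by rw [hir, Category.comp_id]
  rw [h2, ← Category.assoc, this, zero_comp]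

lemma rc_of_isZero {Y : C} (hY : IsZero Y) (n : ℤ) : Y ∈ Rc P n :=
  fun _ _ f => hY.eq_of_tgt f 0

/-- maps into a positively shifted object vanish if they vanish after unshifting -/
lemma hom_zero_to_shift {T Y : C} (i : ℤ) (h : ∀ g : T⟦-i⟧ ⟶ Y, g = 0)
    (f : T ⟶ Y⟦i⟧) : f = 0 := by
  have h2 : (shiftFunctor C (-i)).map f ≫ (shiftShiftNeg Y i).hom = 0 := h _
  have h3 : (shiftFunctor C (-i)).map f = 0 := by
    rw [← cancel_mono (shiftShiftNeg Y i).hom, zero_comp, h2]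
  apply (shiftFunctor C (-i)).map_injective
  simpa using h3

lemma rc_shift (hzero : ∀ X : C, IsZero X → X ∈ P) {Y : C} {n : ℤ} (hY : Y ∈ Rc P n) (i : ℤ) : Y⟦i⟧ ∈ Rc P (n + i) := by
  intro T hT f
  have hT2 : T⟦-i⟧ ∈ LeC P n := by
    have := leC_shift hzero hT (-i)
    have e : n + i + -i = n := by omega
    rwa [e] at this
  exact hom_zero_to_shift i (fun g => hY _ hT2 g) f

lemma lhat_mono {n m : ℤ} (h : n ≤ m) : Lhat P n ⊆ Lhat P m :=
  fun _ hX Y hY f => hX Y (rc_anti h hY) f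

lemma lhat_ec (n : ℤ) : EC (Lhat P n) := by
  intro A B Z f g h hT hA hZ Y hYm t
  have h1 : f ≫ t = 0 := hA Y hYm (f ≫ t)
  obtain ⟨t', ht'⟩ := Triangle.yoneda_exact₂ _ hT t h1
  rw [ht', hZ Y hYm t']; exact comp_zero

lemma lhat_retract (n : ℤ) : RC (Lhat P n) := by
  intro X Y i r hir hX V hVm t
  have : r ≫ t = 0 := hX V hVm (r ≫ t)
  calc t = i ≫ r ≫ t := by rw [← Category.assoc, hir, Category.id_comp]
  _ = 0 := by rw [this, comp_zero]

lemma lhat_of_isZero {Y : C} (hY : IsZero Y) (n : ℤ) : Y ∈ Lhat P n :=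
  fun _ _ f => hY.eq_of_src f 0

lemma lhat_shift (hzero : ∀ X : C, IsZero X → X ∈ P) {X : C} {n : ℤ} (hX : X ∈ Lhat P n) (i : ℤ) : X⟦i⟧ ∈ Lhat P (n + i) := by
  intro Y hY f
  have hY2 : Y⟦-i⟧ ∈ Rc P n := by
    have := rc_shift hzero hY (-i)
    have e : n + i + -i = n := by omega
    rwa [e] at this
  exact hom_zero_shift_transfer i (fun g => hX _ hY2 g) f

end RcLhat

section Orth

variable {hP : True}

lemma conn_core (hconn : ∀ X ∈ P, ∀ Y ∈ P, ∀ i : ℤ, 0 < i → ∀ f : X ⟶ Y⟦i⟧, f = 0) {Q' Q : C} (hQ' : Q' ∈ P) (hQ : Q ∈ P) {i j : ℤ} (hij : i < j)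
    (f : Q'⟦i⟧ ⟶ Q⟦j⟧) : f = 0 := by
  apply hom_zero_shift_transfer i
  intro g
  have hm : g ≫ ((shiftFunctorAdd C j (-i)).app Q).inv = 0 :=
    hconn Q' hQ' Q hQ (j + -i) (by omega) _
  rw [← cancel_mono ((shiftFunctorAdd C j (-i)).app Q).inv, zero_comp, hm]

/-- maps from `LeC n` to `Q⟦j⟧`, `Q ∈ P`, `n < j`, vanish -/
lemma leC_to_gen_zero (hconn : ∀ X ∈ P, ∀ Y ∈ P, ∀ i : ℤ, 0 < i → ∀ f : X ⟶ Y⟦i⟧, f = 0) {T : C} {n : ℤ} (hT : T ∈ LeC P n) {Q : C} (hQ : Q ∈ P)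
    {j : ℤ} (hj : n < j) (f : T ⟶ Q⟦j⟧) : f = 0 := by
  have : T ∈ {T : C | ∀ f : T ⟶ Q⟦j⟧, f = 0} := by
    refine hT _ ⟨fun Q' hQ' i hi => ?_, ?_⟩
    · intro f; exact conn_core hconn hQ' hQ (by omega) f
    · intro A B Z f g h hTr hA hZ t
      have h1 : f ≫ t = 0 := hA (f ≫ t)
      obtain ⟨t', ht'⟩ := Triangle.yoneda_exact₂ _ hTr t h1
      rw [ht', hZ t']; exact comp_zero
  exact this f

/-- objects of `P` lie in `Rc (-1)` -/
lemma gen_mem_rc (hconn : ∀ X ∈ P, ∀ Y ∈ P, ∀ i : ℤ, 0 < i → ∀ f : X ⟶ Y⟦i⟧, f = 0) {Q : C} (hQ : Q ∈ P) : Q ∈ Rc P (-1) := by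
  intro T hT f
  have h0 : (f ≫ ((shiftFunctorZero C ℤ).app Q).inv) = 0 :=
    leC_to_gen_zero hconn hT hQ (by omega : (-1:ℤ) < 0) _
  rw [← cancel_mono ((shiftFunctorZero C ℤ).app Q).inv, zero_comp, h0]

lemma geR_sub_rc (hconn : ∀ X ∈ P, ∀ Y ∈ P, ∀ i : ℤ, 0 < i → ∀ f : X ⟶ Y⟦i⟧, f = 0) {n m : ℤ} (h : n < m) : GeR P m ⊆ Rc P n := by
  intro Y hY
  refine hY _ ⟨fun Q hQ j hj T hT f => leC_to_gen_zero hconn hT hQ (by omega) f,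
    rc_ec n, rc_retract n⟩

lemma leR_sub_lhat (n : ℤ) : LeR P n ⊆ Lhat P n := by
  intro X hX
  refine hX _ ⟨fun Q hQ i hi Y hY f => hY _ (leC_gen hQ hi) f, lhat_ec n, lhat_retract n⟩

lemma leC_sub_lhat (n : ℤ) : LeC P n ⊆ Lhat P n :=
  (leC_sub_leR n).trans (leR_sub_lhat n)

/-- the main orthogonality: `Hom(LeR n, GeR (n+1)) = 0` -/
lemma orth_main (hconn : ∀ X ∈ P, ∀ Y ∈ P, ∀ i : ℤ, 0 < i → ∀ f : X ⟶ Y⟦i⟧, f = 0) {n : ℤ} {X Y : C} (hX : X ∈ LeR P n) (hY : Y ∈ GeR P (n+1))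
    (f : X ⟶ Y) : f = 0 :=
  leR_sub_lhat n hX Y (geR_sub_rc hconn (by omega) hY) f

end Orth

section HeartLemmas

lemma heart_retract (n : ℤ) : RC (Heart P n) := by
  intro X Y i r hir hX
  obtain ⟨W, hW, iX, rX, hiX⟩ := hX
  exact ⟨W, hW, i ≫ iX, rX ≫ r, by
    rw [Category.assoc, ← Category.assoc iX, hiX, Category.id_comp, hir]⟩

lemma heart_gen {Q : C} (hQ : Q ∈ P) (n : ℤ) : Q⟦n⟧ ∈ Heart P n :=
  ⟨Q, hQ, 𝟙 _, 𝟙 _, by simp⟩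

lemma heart_zero (hzero : ∀ X : C, IsZero X → X ∈ P) {Z : C} (hZ : IsZero Z) (n : ℤ) :
    Z ∈ Heart P n :=
  ⟨0, hzero _ (isZero_zero C), 0, 0, by rw [zero_comp]; exact (hZ.eq_of_src _ _).symm⟩

lemma heart_sub_leR (n : ℤ) : Heart P n ⊆ LeR P n := by
  rintro X ⟨W, hW, i, r, hir⟩
  exact leR_rc n _ _ i r hir (leR_gen hW (le_refl n))

lemma heart_sub_geR (n : ℤ) : Heart P n ⊆ GeR P n := by
  rintro X ⟨W, hW, i, r, hir⟩
  exact geR_rc n _ _ i r hir (geR_gen hW (le_refl n))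

lemma heart_iso {X Y : C} {n : ℤ} (hX : X ∈ Heart P n) (e : X ≅ Y) : Y ∈ Heart P n :=
  heart_retract n _ _ e.inv e.hom (by simp) hX

/-- heart objects in adjacent degrees have no positive exts: `Hom(Heart n, (Heart n)⟦1⟧) = 0`
    in the form needed: maps `X ⟶ Y⟦1⟧` where `X Y ∈ Heart n`. -/
lemma heart_conn (hconn : ∀ X ∈ P, ∀ Y ∈ P, ∀ i : ℤ, 0 < i → ∀ f : X ⟶ Y⟦i⟧, f = 0)
    {X Y : C} {n : ℤ} (hX : X ∈ Heart P n) (hY : Y ∈ Heart P n)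
    (f : X ⟶ Y⟦(1:ℤ)⟧) : f = 0 := by
  obtain ⟨W, hW, iX, rX, hiX⟩ := hX
  obtain ⟨W', hW', iY, rY, hiY⟩ := hY
  have hg : rX ≫ f ≫ iY⟦(1:ℤ)⟧' = 0 := by
    have : ∀ g : W⟦n⟧ ⟶ W'⟦n⟧⟦(1:ℤ)⟧, g = 0 := by
      intro g
      have hc : g ≫ ((shiftFunctorComm C n 1).app W').hom = 0 := by
        apply shift_hom_zero_of n
        intro g2
        exact hconn W hW W' hW' 1 (by omega) g2
      rw [← cancel_mono ((shiftFunctorComm C n 1).app W').hom, zero_comp, hc]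
    exact this _
  calc f = iX ≫ rX ≫ f := by rw [← Category.assoc, hiX, Category.id_comp]
  _ = iX ≫ rX ≫ (f ≫ iY⟦(1:ℤ)⟧' ≫ rY⟦(1:ℤ)⟧') := by
        rw [← Functor.map_comp, hiY]; simp
  _ = 0 := by
        rw [show f ≫ iY⟦(1:ℤ)⟧' ≫ rY⟦(1:ℤ)⟧' = (f ≫ iY⟦(1:ℤ)⟧') ≫ rY⟦(1:ℤ)⟧' by
          rw [Category.assoc]]
        rw [show rX ≫ (f ≫ iY⟦(1:ℤ)⟧') ≫ rY⟦(1:ℤ)⟧' = (rX ≫ f ≫ iY⟦(1:ℤ)⟧') ≫ rY⟦(1:ℤ)⟧' by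
          simp only [Category.assoc]]
        rw [hg, zero_comp, comp_zero]

lemma heart_shift {X : C} {n : ℤ} (hX : X ∈ Heart P n) (i : ℤ) : X⟦i⟧ ∈ Heart P (n + i) := by
  obtain ⟨W, hW, iX, rX, hiX⟩ := hX
  refine ⟨W, hW, iX⟦i⟧' ≫ ((shiftFunctorAdd C n i).app W).inv,
    ((shiftFunctorAdd C n i).app W).hom ≫ rX⟦i⟧', ?_⟩
  rw [Category.assoc, ← Category.assoc ((shiftFunctorAdd C n i).app W).inv, Iso.inv_hom_id,
    Category.id_comp, ← Functor.map_comp, hiX]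
  simp

/-- the heart is closed under binary biproducts (needs `hadd`) -/
lemma heart_biprod (hadd : ∀ X ∈ P, ∀ Y ∈ P, (X ⊞ Y) ∈ P)
    {X Y : C} {n : ℤ} (hX : X ∈ Heart P n) (hY : Y ∈ Heart P n) : (X ⊞ Y) ∈ Heart P n := by
  obtain ⟨W, hW, iX, rX, hiX⟩ := hX
  obtain ⟨W', hW', iY, rY, hiY⟩ := hY
  refine ⟨W ⊞ W', hadd W hW W' hW',
    biprod.desc (iX ≫ (biprod.inl : W ⟶ W ⊞ W')⟦n⟧') (iY ≫ (biprod.inr : W' ⟶ W ⊞ W')⟦n⟧'),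
    biprod.lift ((biprod.fst : W ⊞ W' ⟶ W)⟦n⟧' ≫ rX) ((biprod.snd : W ⊞ W' ⟶ W')⟦n⟧' ≫ rY), ?_⟩
  apply biprod.hom_ext' <;> apply biprod.hom_ext <;>
    simp [← Functor.map_comp_assoc, hiX, hiY, ← Functor.map_comp]

end HeartLemmas

section Tools

/-- TR3 applied to doubly rotated triangles: complete a commutative square on
`mor₃` to a middle morphism. -/
lemma complete_rot2 {T₁ T₂ : Triangle C} (h₁ : T₁ ∈ distTriang C) (h₂ : T₂ ∈ distTriang C)
    (a : T₁.obj₃ ⟶ T₂.obj₃) (b : T₁.obj₁ ⟶ T₂.obj₁)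
    (sq : T₁.mor₃ ≫ b⟦(1:ℤ)⟧' = a ≫ T₂.mor₃) :
    ∃ m : T₁.obj₂ ⟶ T₂.obj₂,
      T₁.mor₁ ≫ m = b ≫ T₂.mor₁ ∧ T₁.mor₂ ≫ a = m ≫ T₂.mor₂ := by
  obtain ⟨c, hc1, hc2⟩ : ∃ c : T₁.obj₂⟦(1:ℤ)⟧ ⟶ T₂.obj₂⟦(1:ℤ)⟧,
      (-T₁.mor₁⟦(1:ℤ)⟧') ≫ c = b⟦(1:ℤ)⟧' ≫ (-T₂.mor₁⟦(1:ℤ)⟧') ∧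
      (-T₁.mor₂⟦(1:ℤ)⟧') ≫ a⟦(1:ℤ)⟧' = c ≫ (-T₂.mor₂⟦(1:ℤ)⟧') :=
    complete_distinguished_triangle_morphism
    (T₁.rotate.rotate) (T₂.rotate.rotate)
    (rot_of_distTriang _ (rot_of_distTriang _ h₁))
    (rot_of_distTriang _ (rot_of_distTriang _ h₂)) a (b⟦(1:ℤ)⟧') sq
  refine ⟨(shiftFunctor C (1:ℤ)).preimage c, ?_, ?_⟩
  · apply (shiftFunctor C (1:ℤ)).map_injective
    have : T₁.mor₁⟦(1:ℤ)⟧' ≫ c = b⟦(1:ℤ)⟧' ≫ T₂.mor₁⟦(1:ℤ)⟧' := by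
      have := hc1
      simp only [Preadditive.neg_comp, Preadditive.comp_neg, neg_inj] at this
      exact this
    simp only [Functor.map_comp, Functor.map_preimage]
    exact this
  · apply (shiftFunctor C (1:ℤ)).map_injective
    have : T₁.mor₂⟦(1:ℤ)⟧' ≫ a⟦(1:ℤ)⟧' = c ≫ T₂.mor₂⟦(1:ℤ)⟧' := by
      have := hc2
      simp only [Preadditive.neg_comp, Preadditive.comp_neg, neg_inj] at this
      exact this
    simp only [Functor.map_comp, Functor.map_preimage]
    exact this

/-- if the first morphism of a distinguished triangle vanishes, the second is split mono -/
lemma retraction_of_mor₁_zero {T : Triangle C} (hT : T ∈ distTriang C) (h : T.mor₁ = 0) :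
    ∃ r : T.obj₃ ⟶ T.obj₂, T.mor₂ ≫ r = 𝟙 T.obj₂ := by
  have : Mono T.mor₂ := T.mono₂ hT h
  have : IsSplitMono T.mor₂ := isSplitMono_of_mono T.mor₂
  exact ⟨retraction T.mor₂, by simp⟩

/-- if the second morphism of a distinguished triangle vanishes, the first is split epi -/
lemma section_of_mor₂_zero {T : Triangle C} (hT : T ∈ distTriang C) (h : T.mor₂ = 0) :
    ∃ s : T.obj₂ ⟶ T.obj₁, s ≫ T.mor₁ = 𝟙 T.obj₂ := by
  have : Epi T.mor₁ := (T.mor₂_eq_zero_iff_epi₁ hT).1 h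
  have : IsSplitEpi T.mor₁ := isSplitEpi_of_epi T.mor₁
  exact ⟨section_ T.mor₁, by simp⟩

lemma leC_biprod {X Y : C} {n : ℤ} (hX : X ∈ LeC P n) (hY : Y ∈ LeC P n) :
    (X ⊞ Y) ∈ LeC P n :=
  ec_triangle (leC_ec n) (binaryBiproductTriangle_distinguished X Y) hX hY

lemma rc_biprod {X Y : C} {n : ℤ} (hX : X ∈ Rc P n) (hY : Y ∈ Rc P n) :
    (X ⊞ Y) ∈ Rc P n :=
  ec_triangle (rc_ec n) (binaryBiproductTriangle_distinguished X Y) hX hY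

/-- an extension of retracts is a retract of an extension -/
lemma ext_retract {A B Z M₁ M₂ : C} (f : A ⟶ B) (g : B ⟶ Z) (h : Z ⟶ A⟦(1:ℤ)⟧)
    (hT : Triangle.mk f g h ∈ distTriang C)
    (i₁ : A ⟶ M₁) (r₁ : M₁ ⟶ A) (h₁ : i₁ ≫ r₁ = 𝟙 A)
    (i₂ : Z ⟶ M₂) (r₂ : M₂ ⟶ Z) (h₂ : i₂ ≫ r₂ = 𝟙 Z) :
    ∃ (Y : C) (u : M₁ ⟶ Y) (v : Y ⟶ M₂) (θ : M₂ ⟶ M₁⟦(1:ℤ)⟧),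
      (Triangle.mk u v θ ∈ distTriang C) ∧ ∃ (j : B ⟶ Y) (k : Y ⟶ B), j ≫ k = 𝟙 B := by
  obtain ⟨Y, u, v, hTY⟩ := distinguished_cocone_triangle₂ (r₂ ≫ h ≫ i₁⟦(1:ℤ)⟧')
  set θ : M₂ ⟶ M₁⟦(1:ℤ)⟧ := r₂ ≫ h ≫ i₁⟦(1:ℤ)⟧' with hθ
  obtain ⟨j, hj1, hj2⟩ : ∃ j : B ⟶ Y, f ≫ j = i₁ ≫ u ∧ g ≫ i₂ = j ≫ v :=
    complete_rot2 hT hTY i₂ i₁ (by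
    show h ≫ i₁⟦(1:ℤ)⟧' = i₂ ≫ θ; rw [hθ]
    rw [← Category.assoc, h₂, Category.id_comp])
  obtain ⟨k₀, hk1, hk2⟩ : ∃ k₀ : Y ⟶ B, u ≫ k₀ = r₁ ≫ f ∧ v ≫ r₂ = k₀ ≫ g :=
    complete_rot2 hTY hT r₂ r₁ (by
    show θ ≫ r₁⟦(1:ℤ)⟧' = r₂ ≫ h; rw [hθ]
    simp only [Category.assoc, ← Functor.map_comp, h₁]
    simp)
  have hjk0 : f ≫ (j ≫ k₀) = f := by
    rw [← Category.assoc, hj1, Category.assoc, hk1, ← Category.assoc, h₁, Category.id_comp]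
  have hfδ : f ≫ (𝟙 B - j ≫ k₀) = 0 := by
    rw [Preadditive.comp_sub, Category.comp_id, hjk0, sub_self]
  have hjk1 : (j ≫ k₀) ≫ g = g := by
    rw [Category.assoc, ← hk2, ← Category.assoc, ← hj2, Category.assoc, h₂, Category.comp_id]
  have hδg : (𝟙 B - j ≫ k₀) ≫ g = 0 := by
    rw [Preadditive.sub_comp, Category.id_comp, hjk1, sub_self]
  obtain ⟨t, ht⟩ : ∃ t : Z ⟶ B, 𝟙 B - j ≫ k₀ = g ≫ t :=
    Triangle.yoneda_exact₂ _ hT (𝟙 B - j ≫ k₀) hfδ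
  have hgt : (g ≫ t) ≫ g = 0 := by rw [← ht]; exact hδg
  have hδδ : (𝟙 B - j ≫ k₀) ≫ (𝟙 B - j ≫ k₀) = 0 := by
    have hassoc : (g ≫ t) ≫ (g ≫ t) = ((g ≫ t) ≫ g) ≫ t := by
      simp only [Category.assoc]
    rw [ht, hassoc, hgt, zero_comp]
  refine ⟨Y, u, v, θ, hTY, j, k₀ ≫ (𝟙 B + (𝟙 B - j ≫ k₀)), ?_⟩
  generalize hδ : 𝟙 B - j ≫ k₀ = δ at hδδ
  have hjk : j ≫ k₀ = 𝟙 B - δ := by rw [← hδ]; abel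
  rw [← Category.assoc, hjk, Preadditive.sub_comp, Category.id_comp, Preadditive.comp_add,
    Category.comp_id, hδδ, add_zero]
  abel

end Tools

section Glue

variable {n : ℤ}

/-- weight decomposition predicate -/
def Dcp (P : Set C) (n : ℤ) (X : C) : Prop :=
  ∃ (A B : C) (f : A ⟶ X) (g : X ⟶ B) (h : B ⟶ A⟦(1:ℤ)⟧),
    (Triangle.mk f g h ∈ distTriang C) ∧ A ∈ Lhat P n ∧ B ∈ Rc P n

lemma dcp_of_lhat {X : C} (hX : X ∈ Lhat P n) : Dcp P n X :=
  ⟨X, 0, 𝟙 X, 0, 0, contractible_distinguished X, hX, rc_of_isZero (isZero_zero C) n⟩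

lemma dcp_of_rc {X : C} (hX : X ∈ Rc P n) : Dcp P n X := by
  refine ⟨(0:C)⟦(-1:ℤ)⟧, X, (contractibleTriangle X).invRotate.mor₁,
    (contractibleTriangle X).invRotate.mor₂, (contractibleTriangle X).invRotate.mor₃,
    inv_rot_of_distTriang _ (contractible_distinguished X),
    lhat_of_isZero (isZero_shift (isZero_zero C) (-1)) n, hX⟩

/-- The key TR3-only gluing lemma: an extension of two decomposable objects is
decomposable, with controlled pieces. -/
lemma glue (hzero : ∀ X : C, IsZero X → X ∈ P)
    {X Y Z : C} {u : X ⟶ Y} {v : Y ⟶ Z} {w : Z ⟶ X⟦(1:ℤ)⟧}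
    (hT : Triangle.mk u v w ∈ distTriang C)
    {A₁ B₁ : C} {f₁ : A₁ ⟶ X} {p₁ : X ⟶ B₁} {δ₁ : B₁ ⟶ A₁⟦(1:ℤ)⟧}
    (hT₁ : Triangle.mk f₁ p₁ δ₁ ∈ distTriang C) (hB₁ : B₁ ∈ Rc P n)
    {A₂ B₂ : C} {f₂ : A₂ ⟶ Z} {p₂ : Z ⟶ B₂} {δ₂ : B₂ ⟶ A₂⟦(1:ℤ)⟧}
    (hT₂ : Triangle.mk f₂ p₂ δ₂ ∈ distTriang C)
    (hA₂ : A₂ ∈ Lhat P n) (hB₂ : B₂ ∈ Rc P n) :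
    ∃ (A B : C) (f : A ⟶ Y) (g : Y ⟶ B) (h : B ⟶ A⟦(1:ℤ)⟧),
      (Triangle.mk f g h ∈ distTriang C) ∧
      (∃ (α : A₁ ⟶ A) (β : A ⟶ A₂) (γ : A₂ ⟶ A₁⟦(1:ℤ)⟧),
        Triangle.mk α β γ ∈ distTriang C) ∧ B ∈ Rc P n := by
  have hB₁s : B₁⟦(1:ℤ)⟧ ∈ Rc P n :=
    rc_anti (by omega : n ≤ n + 1) (rc_shift hzero hB₁ 1)
  -- step 1 : the connecting morphism γ
  have hrot1 := rot_of_distTriang _ (rot_of_distTriang _ hT₁)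
  have hstep1 : (f₂ ≫ w) ≫ (-p₁⟦(1:ℤ)⟧') = 0 := by
    rw [Preadditive.comp_neg, neg_eq_zero, Category.assoc, ← Category.assoc]
    exact hA₂ _ hB₁s _
  obtain ⟨γ', hγ'⟩ : ∃ γ' : A₂ ⟶ A₁⟦(1:ℤ)⟧, f₂ ≫ w = γ' ≫ (-f₁⟦(1:ℤ)⟧') :=
    Triangle.coyoneda_exact₃ _ hrot1 (f₂ ≫ w) hstep1
  set γ : A₂ ⟶ A₁⟦(1:ℤ)⟧ := -γ' with hγdef
  have hγ : γ ≫ f₁⟦(1:ℤ)⟧' = f₂ ≫ w := by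
    rw [hγdef, Preadditive.neg_comp, ← Preadditive.comp_neg, ← hγ']
  -- step 2 : the extension A of A₁ and A₂
  obtain ⟨Am, α, β, hT₄⟩ := distinguished_cocone_triangle₂ γ
  -- step 3 : the map φ : Am ⟶ Y
  obtain ⟨φ, hφ₁, hφ₂⟩ : ∃ φ : Am ⟶ Y, α ≫ φ = f₁ ≫ u ∧ β ≫ f₂ = φ ≫ v :=
    complete_rot2 hT₄ hT f₂ f₁ (by exact hγ)
  -- step 4 : its cone
  obtain ⟨N, q, ε, hT₅⟩ := distinguished_cocone_triangle φ
  refine ⟨Am, N, φ, q, ε, hT₅, ⟨α, β, γ, hT₄⟩, ?_⟩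
  intro T0 hT0 t
  -- (5a) : injectivity of φ⟦1⟧ on maps from T0 to Am⟦1⟧
  have key : ∀ x : T0 ⟶ Am⟦(1:ℤ)⟧, x ≫ φ⟦(1:ℤ)⟧' = 0 → x = 0 := by
    intro x hx
    obtain ⟨g₂, hg₂⟩ : ∃ g₂ : T0 ⟶ B₂, x ≫ β⟦(1:ℤ)⟧' = g₂ ≫ δ₂ := Triangle.coyoneda_exact₂ _
      (rot_of_distTriang _ (rot_of_distTriang _ hT₂)) (x ≫ β⟦(1:ℤ)⟧') (by
        show (x ≫ β⟦(1:ℤ)⟧') ≫ (-f₂⟦(1:ℤ)⟧') = 0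
        rw [Preadditive.comp_neg, neg_eq_zero, Category.assoc, ← Functor.map_comp]
        have : β ≫ f₂ = φ ≫ v := hφ₂
        rw [this, Functor.map_comp, ← Category.assoc, hx, zero_comp])
    have hx₂0 : x ≫ β⟦(1:ℤ)⟧' = 0 := by
      rw [hg₂, hB₂ T0 hT0 g₂, zero_comp]
    obtain ⟨y', hy'⟩ : ∃ y' : T0 ⟶ A₁⟦(1:ℤ)⟧, x = y' ≫ (-α⟦(1:ℤ)⟧') := Triangle.coyoneda_exact₂ _
      (rot_of_distTriang _ (rot_of_distTriang _ (rot_of_distTriang _ hT₄))) x (by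
        show x ≫ (-β⟦(1:ℤ)⟧') = 0
        rw [Preadditive.comp_neg, neg_eq_zero]
        exact hx₂0)
    set y : T0 ⟶ A₁⟦(1:ℤ)⟧ := -y' with hydef
    have hy : x = y ≫ α⟦(1:ℤ)⟧' := by
      rw [hydef, Preadditive.neg_comp, ← Preadditive.comp_neg, ← hy']
    have hz₁ : (y ≫ f₁⟦(1:ℤ)⟧') ≫ ((Triangle.mk u v w).rotate.rotate).mor₂ = 0 := by
      show (y ≫ f₁⟦(1:ℤ)⟧') ≫ (-u⟦(1:ℤ)⟧') = 0
      rw [Preadditive.comp_neg, neg_eq_zero, Category.assoc, ← Functor.map_comp, ← hφ₁,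
        Functor.map_comp, ← Category.assoc, ← hy, hx]
    obtain ⟨z, hz⟩ : ∃ z : T0 ⟶ Z, y ≫ f₁⟦(1:ℤ)⟧' = z ≫ w := Triangle.coyoneda_exact₂ _
      (rot_of_distTriang _ (rot_of_distTriang _ hT)) (y ≫ f₁⟦(1:ℤ)⟧') hz₁
    obtain ⟨z', hz'⟩ : ∃ z' : T0 ⟶ A₂, z = z' ≫ f₂ :=
      Triangle.coyoneda_exact₂ _ hT₂ z (hB₂ T0 hT0 _)
    have hyz : (y - z' ≫ γ) ≫ ((Triangle.mk f₁ p₁ δ₁).rotate.rotate).mor₂ = 0 := by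
      show (y - z' ≫ γ) ≫ (-f₁⟦(1:ℤ)⟧') = 0
      rw [Preadditive.comp_neg, neg_eq_zero, Preadditive.sub_comp, Category.assoc, hγ,
        ← Category.assoc, ← hz', ← hz, sub_self]
    obtain ⟨g₁, hg₁⟩ : ∃ g₁ : T0 ⟶ B₁, y - z' ≫ γ = g₁ ≫ δ₁ :=
      Triangle.coyoneda_exact₂ _ hrot1 (y - z' ≫ γ) hyz
    have hyeq : y = z' ≫ γ := by
      have : y - z' ≫ γ = 0 := by rw [hg₁, hB₁ T0 hT0 g₁, zero_comp]
      rw [← sub_eq_zero]; exact this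
    have hγα : γ ≫ α⟦(1:ℤ)⟧' = 0 := comp_distTriang_mor_zero₃₁ _ hT₄
    rw [hy, hyeq, Category.assoc, hγα, comp_zero]
  -- (5b) : every map T0 ⟶ Y factors through φ
  have cover : ∀ s : T0 ⟶ Y, ∃ b : T0 ⟶ Am, s = b ≫ φ := by
    intro s
    obtain ⟨a, ha⟩ : ∃ a : T0 ⟶ A₂, s ≫ v = a ≫ f₂ :=
      Triangle.coyoneda_exact₂ _ hT₂ (s ≫ v) (hB₂ T0 hT0 _)
    have hvw : v ≫ w = 0 := comp_distTriang_mor_zero₂₃ _ hT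
    have haγ : (a ≫ γ) ≫ ((Triangle.mk f₁ p₁ δ₁).rotate.rotate).mor₂ = 0 := by
      show (a ≫ γ) ≫ (-f₁⟦(1:ℤ)⟧') = 0
      rw [Preadditive.comp_neg, neg_eq_zero, Category.assoc, hγ, ← Category.assoc, ← ha,
        Category.assoc, hvw, comp_zero]
    obtain ⟨g, hg⟩ : ∃ g : T0 ⟶ B₁, a ≫ γ = g ≫ δ₁ :=
      Triangle.coyoneda_exact₂ _ hrot1 (a ≫ γ) haγ
    have haγ0 : a ≫ γ = 0 := by rw [hg, hB₁ T0 hT0 g, zero_comp]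
    obtain ⟨b₀0, hb₀0⟩ := Triangle.coyoneda_exact₃ _ hT₄ a haγ0
    let b₀ : T0 ⟶ Am := b₀0
    have hb₀ : a = b₀ ≫ β := hb₀0
    have hsv : (s - b₀ ≫ φ) ≫ v = 0 := by
      rw [Preadditive.sub_comp, Category.assoc, ← hφ₂, ← Category.assoc, ← hb₀, ← ha, sub_self]
    obtain ⟨e, he⟩ : ∃ e : T0 ⟶ X, s - b₀ ≫ φ = e ≫ u :=
      Triangle.coyoneda_exact₂ _ hT (s - b₀ ≫ φ) hsv
    obtain ⟨a₁, ha₁⟩ : ∃ a₁ : T0 ⟶ A₁, e = a₁ ≫ f₁ :=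
      Triangle.coyoneda_exact₂ _ hT₁ e (hB₁ T0 hT0 _)
    refine ⟨b₀ + a₁ ≫ α, ?_⟩
    rw [Preadditive.add_comp, Category.assoc, hφ₁, ← Category.assoc, ← ha₁, ← he]
    abel
  -- (5c) : conclude
  have hεφ : ε ≫ φ⟦(1:ℤ)⟧' = 0 := comp_distTriang_mor_zero₃₁ _ hT₅
  have htε : t ≫ ε = 0 := by
    apply key
    rw [Category.assoc, hεφ, comp_zero]
  obtain ⟨s, hs⟩ : ∃ s : T0 ⟶ Y, t = s ≫ q := Triangle.coyoneda_exact₃ _ hT₅ t htε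
  obtain ⟨b, hb⟩ := cover s
  have hφq : φ ≫ q = 0 := comp_distTriang_mor_zero₁₂ _ hT₅
  rw [hs, hb, Category.assoc, hφq, comp_zero]

end Glue

section DecompE

lemma gen_shift_mem_rc (hconn : ∀ X ∈ P, ∀ Y ∈ P, ∀ i : ℤ, 0 < i → ∀ f : X ⟶ Y⟦i⟧, f = 0) {Q : C} (hQ : Q ∈ P) {n i : ℤ} (h : n < i) : Q⟦i⟧ ∈ Rc P n :=
  fun T hT f => leC_to_gen_zero hconn hT hQ h f

/-- every object of `LeC b` admits decompositions at every level, with the lower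
piece in `LeC n` -/
lemma decompE (hzero : ∀ X : C, IsZero X → X ∈ P)
    (hconn : ∀ X ∈ P, ∀ Y ∈ P, ∀ i : ℤ, 0 < i → ∀ f : X ⟶ Y⟦i⟧, f = 0) {b : ℤ} {M : C} (hM : M ∈ LeC P b) (n : ℤ) :
    ∃ (A B : C) (f : A ⟶ M) (g : M ⟶ B) (h : B ⟶ A⟦(1:ℤ)⟧),
      (Triangle.mk f g h ∈ distTriang C) ∧ A ∈ LeC P n ∧ B ∈ Rc P n := by
  have : M ∈ {M : C | ∀ m : ℤ, ∃ (A B : C) (f : A ⟶ M) (g : M ⟶ B) (h : B ⟶ A⟦(1:ℤ)⟧),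
      (Triangle.mk f g h ∈ distTriang C) ∧ A ∈ LeC P m ∧ B ∈ Rc P m} := by
    refine hM _ ⟨fun Q hQ i hi m => ?_, ?_⟩
    · by_cases hin : i ≤ m
      · exact ⟨Q⟦i⟧, 0, 𝟙 _, 0, 0, contractible_distinguished _, leC_gen hQ hin,
          rc_of_isZero (isZero_zero C) m⟩
      · exact ⟨(0:C)⟦(-1:ℤ)⟧, Q⟦i⟧, (contractibleTriangle (Q⟦i⟧)).invRotate.mor₁,
          (contractibleTriangle (Q⟦i⟧)).invRotate.mor₂,
          (contractibleTriangle (Q⟦i⟧)).invRotate.mor₃,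
          inv_rot_of_distTriang _ (contractible_distinguished _),
          leC_zero hzero (isZero_shift (isZero_zero C) (-1)) m,
          gen_shift_mem_rc hconn hQ (by omega)⟩
    · intro X Y Z u v w hT hX hZ m
      obtain ⟨A₁, B₁, f₁, p₁, δ₁, hT₁, hA₁, hB₁⟩ := hX m
      obtain ⟨A₂, B₂, f₂, p₂, δ₂, hT₂, hA₂, hB₂⟩ := hZ m
      obtain ⟨A, B, f, g, h, hTn, ⟨α, β, γ, hT₄⟩, hB⟩ :=
        glue hzero hT hT₁ hB₁ hT₂ (leC_sub_lhat m hA₂) hB₂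
      exact ⟨A, B, f, g, h, hTn, leC_ec m α β γ hT₄ hA₁ hA₂, hB⟩
  exact this n

end DecompE

section Top

/-- top decomposition: every object of `LeC n` is an extension of a heart object in
degree `n` by an object left-orthogonal to `Rc (n-1)` -/
lemma top (hzero : ∀ X : C, IsZero X → X ∈ P)
    (hconn : ∀ X ∈ P, ∀ Y ∈ P, ∀ i : ℤ, 0 < i → ∀ f : X ⟶ Y⟦i⟧, f = 0)
    (hadd : ∀ X ∈ P, ∀ Y ∈ P, (X ⊞ Y) ∈ P)
    {n : ℤ} {W : C} (hW : W ∈ LeC P n) :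
    ∃ (F W0 : C) (f : F ⟶ W) (g : W ⟶ W0) (h : W0 ⟶ F⟦(1:ℤ)⟧),
      (Triangle.mk f g h ∈ distTriang C) ∧ (∀ V ∈ Rc P (n-1), ∀ φ : F ⟶ V, φ = 0) ∧
      W0 ∈ Heart P n := by
  have : W ∈ {W : C |
      ∃ (F W0 : C) (f : F ⟶ W) (g : W ⟶ W0) (h : W0 ⟶ F⟦(1:ℤ)⟧),
      (Triangle.mk f g h ∈ distTriang C) ∧ (∀ V ∈ Rc P (n-1), ∀ φ : F ⟶ V, φ = 0) ∧
      W0 ∈ Heart P n} := by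
    refine hW _ ⟨fun Q hQ i hi => ?_, ?_⟩
    · by_cases hin : i ≤ n - 1
      · exact ⟨Q⟦i⟧, 0, 𝟙 _, 0, 0, contractible_distinguished _,
          fun V hV φ => hV _ (leC_gen hQ hin) φ, heart_zero hzero (isZero_zero C) n⟩
      · have hieq : i = n := by omega
        subst hieq
        exact ⟨(0:C)⟦(-1:ℤ)⟧, Q⟦i⟧, (contractibleTriangle (Q⟦i⟧)).invRotate.mor₁,
          (contractibleTriangle (Q⟦i⟧)).invRotate.mor₂,
          (contractibleTriangle (Q⟦i⟧)).invRotate.mor₃,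
          inv_rot_of_distTriang _ (contractible_distinguished _),
          fun V hV φ => (isZero_shift (isZero_zero C) (-1)).eq_of_src φ 0,
          heart_gen hQ i⟩
    · intro W₁ W W₂ u v w hT h₁ h₂
      obtain ⟨E₁, S₁, f₁, p₁, δ₁, hT₁, hE₁, hS₁⟩ := h₁
      obtain ⟨E₂, S₂, f₂, p₂, δ₂, hT₂, hE₂, hS₂⟩ := h₂
      -- the heart pieces are in `Rc (n-1)`
      have hS₁rc : S₁ ∈ Rc P (n-1) := geR_sub_rc hconn (by omega) (heart_sub_geR n hS₁)
      have hS₁src : S₁⟦(1:ℤ)⟧ ∈ Rc P (n-1) := by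
        have h1 := rc_shift hzero hS₁rc 1
        have e : n - 1 + 1 = n := by omega
        rw [e] at h1
        exact rc_anti (by omega) h1
      -- (g0) : `w` composes to zero into `S₁⟦1⟧`
      have hω : w ≫ p₁⟦(1:ℤ)⟧' = 0 := by
        have hfω : f₂ ≫ (w ≫ p₁⟦(1:ℤ)⟧') = 0 := hE₂ _ hS₁src _
        obtain ⟨θ, hθ⟩ : ∃ θ : S₂ ⟶ S₁⟦(1:ℤ)⟧, w ≫ p₁⟦(1:ℤ)⟧' = p₂ ≫ θ :=
          Triangle.yoneda_exact₂ _ hT₂ (w ≫ p₁⟦(1:ℤ)⟧') hfω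
        rw [hθ, heart_conn hconn hS₂ hS₁ θ, comp_zero]
      -- (g2) : the map `Ψ` into the biproduct
      have hTbi := binaryBiproductTriangle_distinguished S₁ S₂
      obtain ⟨Ψ, hΨ₁, hΨ₂⟩ : ∃ Ψ : W ⟶ S₁ ⊞ S₂, u ≫ Ψ = p₁ ≫ biprod.inl ∧
          v ≫ p₂ = Ψ ≫ biprod.snd := complete_rot2 hT hTbi p₂ p₁ (by
        show w ≫ p₁⟦(1:ℤ)⟧' = p₂ ≫ 0
        rw [comp_zero]
        exact hω)
      -- (g3) : its fibre
      obtain ⟨G, c₂, d, hTG⟩ := distinguished_cocone_triangle Ψ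
      have hTF : (Triangle.mk Ψ c₂ d).invRotate ∈ distTriang C :=
        inv_rot_of_distTriang _ hTG
      refine ⟨_, _, (Triangle.mk Ψ c₂ d).invRotate.mor₁, (Triangle.mk Ψ c₂ d).invRotate.mor₂,
        (Triangle.mk Ψ c₂ d).invRotate.mor₃, hTF, ?_, heart_biprod hadd hS₁ hS₂⟩
      -- (g4) : the fibre is left-orthogonal to `Rc (n-1)`
      intro V hV φf
      -- every map `W ⟶ V` factors through `Ψ`
      have cover : ∀ ψ : W ⟶ V, ∃ χ : (S₁ ⊞ S₂) ⟶ V, ψ = Ψ ≫ χ := by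
        intro ψ
        have hu : f₁ ≫ (u ≫ ψ) = 0 := by
          rw [← Category.assoc]
          exact hE₁ _ hV _
        obtain ⟨χ₁, hχ₁⟩ : ∃ χ₁ : S₁ ⟶ V, u ≫ ψ = p₁ ≫ χ₁ :=
          Triangle.yoneda_exact₂ _ hT₁ (u ≫ ψ) hu
        have hψ' : u ≫ (ψ - Ψ ≫ biprod.desc χ₁ 0) = 0 := by
          rw [Preadditive.comp_sub, ← Category.assoc, hΨ₁, Category.assoc, biprod.inl_desc,
            ← hχ₁, sub_self]
        obtain ⟨χ₂', hχ₂'⟩ : ∃ χ₂' : W₂ ⟶ V, ψ - Ψ ≫ biprod.desc χ₁ 0 = v ≫ χ₂' :=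
          Triangle.yoneda_exact₂ _ hT (ψ - Ψ ≫ biprod.desc χ₁ 0) hψ'
        have hf₂χ : f₂ ≫ χ₂' = 0 := hE₂ _ hV _
        obtain ⟨χ₂, hχ₂⟩ : ∃ χ₂ : S₂ ⟶ V, χ₂' = p₂ ≫ χ₂ :=
          Triangle.yoneda_exact₂ _ hT₂ χ₂' hf₂χ
        refine ⟨biprod.desc χ₁ 0 + biprod.snd ≫ χ₂, ?_⟩
        calc ψ = (ψ - Ψ ≫ biprod.desc χ₁ 0) + Ψ ≫ biprod.desc χ₁ 0 := by abel
        _ = v ≫ χ₂' + Ψ ≫ biprod.desc χ₁ 0 := by rw [hχ₂']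
        _ = (v ≫ p₂) ≫ χ₂ + Ψ ≫ biprod.desc χ₁ 0 := by rw [hχ₂, Category.assoc]
        _ = Ψ ≫ (biprod.snd ≫ χ₂) + Ψ ≫ biprod.desc χ₁ 0 := by rw [hΨ₂, Category.assoc]
        _ = Ψ ≫ (biprod.desc χ₁ 0 + biprod.snd ≫ χ₂) := by
              rw [Preadditive.comp_add]; exact add_comm _ _
      -- maps from `(S₁ ⊞ S₂)⟦-1⟧` to `V` vanish
      have hSm : ∀ g0 : (S₁ ⊞ S₂)⟦(-1:ℤ)⟧ ⟶ V, g0 = 0 := by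
        intro g0
        have hmem : (S₁ ⊞ S₂)⟦(-1:ℤ)⟧ ∈ Heart P (n - 1) := by
          have h1 := heart_shift (heart_biprod hadd hS₁ hS₂) (-1)
          have e : n + -1 = n - 1 := by omega
          rwa [e] at h1
        exact leR_sub_lhat (n-1) (heart_sub_leR (n-1) hmem) V hV g0
      have hTF2 : (Triangle.mk Ψ c₂ d).invRotate.invRotate ∈ distTriang C :=
        inv_rot_of_distTriang _ hTF
      obtain ⟨g0, hg0⟩ := Triangle.yoneda_exact₂ _ hTF2 φf (hSm _)
      obtain ⟨χ, hχ⟩ := cover g0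
      have h12 : (Triangle.mk Ψ c₂ d).invRotate.invRotate.mor₂ ≫ Ψ = 0 :=
        comp_distTriang_mor_zero₁₂ _ hTF
      rw [hg0, hχ]; exact (Category.assoc _ _ _).symm.trans ((congrArg (· ≫ χ) h12).trans zero_comp)
  exact this

end Top

section Pure

/-- an object of `LeC n` right-orthogonal to `LeC (n-1)` is a heart object -/
lemma pure_heart (hzero : ∀ X : C, IsZero X → X ∈ P)
    (hconn : ∀ X ∈ P, ∀ Y ∈ P, ∀ i : ℤ, 0 < i → ∀ f : X ⟶ Y⟦i⟧, f = 0)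
    (hadd : ∀ X ∈ P, ∀ Y ∈ P, (X ⊞ Y) ∈ P)
    {n : ℤ} {Y : C} (hY1 : Y ∈ LeC P n) (hY2 : Y ∈ Rc P (n-1)) : Y ∈ Heart P n := by
  obtain ⟨F, W0, f, g, h, hT, hFv, hW0⟩ := top hzero hconn hadd hY1
  have hf : (Triangle.mk f g h).mor₁ = 0 := hFv Y hY2 f
  obtain ⟨r, hr⟩ := retraction_of_mor₁_zero hT hf
  exact heart_retract n W0 Y g r hr hW0

/-- bounded objects right-orthogonal to `LeC (m-1)` lie in `GeR m` -/
lemma rc_bounded_geR (hzero : ∀ X : C, IsZero X → X ∈ P)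
    (hconn : ∀ X ∈ P, ∀ Y ∈ P, ∀ i : ℤ, 0 < i → ∀ f : X ⟶ Y⟦i⟧, f = 0)
    (hadd : ∀ X ∈ P, ∀ Y ∈ P, (X ⊞ Y) ∈ P) :
    ∀ (k : ℕ) (m c : ℤ), c ≤ m + k → ∀ B : C, B ∈ LeC P c → B ∈ Rc P (m-1) →
      B ∈ GeR P m := by
  intro k
  induction k with
  | zero =>
    intro m c hc B hB1 hB2
    have hc' : c ≤ m := by omega
    have he : m - 1 = m - 1 := rfl
    exact heart_sub_geR m (pure_heart hzero hconn hadd (leC_mono hc' hB1) hB2)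
  | succ k ih =>
    intro m c hc B hB1 hB2
    by_cases hck : c ≤ m + k
    · exact ih m c hck B hB1 hB2
    · obtain ⟨A₂, B₂, f', p', δ', hT', hA₂, hB₂⟩ := decompE hzero hconn hB1 (c-1)
      have hB₂le : B₂ ∈ LeC P c := by
        refine ec_triangle (leC_ec c) (rot_of_distTriang _ hT') hB1 ?_
        have h1 := leC_shift hzero hA₂ 1
        have e : c - 1 + 1 = c := by omega
        rwa [e] at h1
      have hB₂heart : B₂ ∈ Heart P c := pure_heart hzero hconn hadd hB₂le hB₂
      have hB₂ge : B₂ ∈ GeR P m :=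
        geR_anti (by omega : m ≤ c) (heart_sub_geR c hB₂heart)
      have hA₂rc : A₂ ∈ Rc P (m-1) := by
        intro T hTm t
        have h1 : t ≫ f' = 0 := hB2 T hTm (t ≫ f')
        obtain ⟨g0, hg0⟩ := Triangle.coyoneda_exact₂ _ (inv_rot_of_distTriang _ hT') t
          (by exact h1)
        have hz : g0 = 0 := by
          apply hom_zero_to_shift (-1)
          intro g1
          have hmem : T⟦(1:ℤ)⟧ ∈ LeC P (c-1) := by
            have h2 := leC_shift hzero hTm 1
            have e : m - 1 + 1 = m := by omega
            rw [e] at h2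
            exact leC_mono (by omega) h2
          exact hB₂ _ hmem g1
        rw [hg0, hz]; exact zero_comp
      have hA₂ge : A₂ ∈ GeR P m := ih m (c-1) (by omega) A₂ hA₂ hA₂rc
      exact geR_ec m f' p' δ' hT' hA₂ge hB₂ge

end Pure

section Univ

variable (P)

/-- the generation hypothesis, unpacked -/
def HGen : Prop :=
  ∀ S : Set C, (∀ X : C, IsZero X → X ∈ S) → (∀ i : ℤ, ∀ X ∈ S, X⟦i⟧ ∈ S) →
    EC S → RC S → P ⊆ S → S = Set.univ

variable {P}

lemma exists_retract (hzero : ∀ X : C, IsZero X → X ∈ P)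
    (hconn : ∀ X ∈ P, ∀ Y ∈ P, ∀ i : ℤ, 0 < i → ∀ f : X ⟶ Y⟦i⟧, f = 0)
    (hgen : HGen P) (X : C) :
    ∃ (M : C) (a b : ℤ) (i : X ⟶ M) (r : M ⟶ X),
      i ≫ r = 𝟙 X ∧ M ∈ LeC P b ∧ M ∈ Rc P (a-1) := by
  have hU := hgen {X : C | ∃ (M : C) (a b : ℤ) (i : X ⟶ M) (r : M ⟶ X),
      i ≫ r = 𝟙 X ∧ M ∈ LeC P b ∧ M ∈ Rc P (a-1)} ?_ ?_ ?_ ?_ ?_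
  · have : X ∈ (Set.univ : Set C) := Set.mem_univ X
    rw [← hU] at this
    exact this
  · intro Z hZ
    exact ⟨Z, 0, 0, 𝟙 Z, 𝟙 Z, by simp, leC_zero hzero hZ 0, rc_of_isZero hZ _⟩
  · rintro i X ⟨M, a, b, ii, r, hir, h1, h2⟩
    refine ⟨M⟦i⟧, a + i, b + i, ii⟦i⟧', r⟦i⟧', ?_, leC_shift hzero h1 i, ?_⟩
    · rw [← Functor.map_comp, hir]; simp
    · have h3 := rc_shift hzero h2 i
      have e : a - 1 + i = a + i - 1 := by omega
      rwa [e] at h3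
  · rintro A B Z f g h hT ⟨M₁, a₁, b₁, i₁, r₁, h₁, hle₁, hrc₁⟩
      ⟨M₂, a₂, b₂, i₂, r₂, h₂, hle₂, hrc₂⟩
    obtain ⟨Y, u, v, θ, hTY, j, k, hjk⟩ := ext_retract f g h hT i₁ r₁ h₁ i₂ r₂ h₂
    refine ⟨Y, min a₁ a₂, max b₁ b₂, j, k, hjk, ?_, ?_⟩
    · exact ec_triangle (leC_ec _) hTY (leC_mono (le_max_left _ _) hle₁)
        (leC_mono (le_max_right _ _) hle₂)
    · exact ec_triangle (rc_ec _) hTY (rc_anti (by omega : min a₁ a₂ - 1 ≤ a₁ - 1) hrc₁)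
        (rc_anti (by omega : min a₁ a₂ - 1 ≤ a₂ - 1) hrc₂)
  · rintro X Y i r hir ⟨M, a, b, ii, rr, hiir, h1, h2⟩
    exact ⟨M, a, b, i ≫ ii, rr ≫ r, by
      rw [Category.assoc, ← Category.assoc ii, hiir, Category.id_comp, hir], h1, h2⟩
  · intro Q hQ
    refine ⟨Q, 0, 0, 𝟙 Q, 𝟙 Q, by simp,
      leC_iso hzero (leC_gen hQ (le_refl 0)) ((shiftFunctorZero C ℤ).app Q), ?_⟩
    have h1 := gen_mem_rc hconn hQ
    have e : (-1 : ℤ) = 0 - 1 := by norm_num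
    rwa [e] at h1

lemma lhat_sub_leR (hzero : ∀ X : C, IsZero X → X ∈ P)
    (hconn : ∀ X ∈ P, ∀ Y ∈ P, ∀ i : ℤ, 0 < i → ∀ f : X ⟶ Y⟦i⟧, f = 0)
    (hgen : HGen P) {n : ℤ} {X : C} (hX : X ∈ Lhat P n) : X ∈ LeR P n := by
  obtain ⟨M, a, b, i, r, hir, hMle, hMrc⟩ := exists_retract hzero hconn hgen X
  obtain ⟨A, B, f, p, δ, hT, hA, hB⟩ := decompE hzero hconn hMle n
  have hip : i ≫ p = 0 := hX B hB _
  obtain ⟨σ, hσ⟩ : ∃ σ : X ⟶ A, i = σ ≫ f := Triangle.coyoneda_exact₂ _ hT i hip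
  refine leR_rc n A X σ (f ≫ r) ?_ (leC_sub_leR n hA)
  rw [← Category.assoc, ← hσ, hir]

lemma rc_sub_geR (hzero : ∀ X : C, IsZero X → X ∈ P)
    (hconn : ∀ X ∈ P, ∀ Y ∈ P, ∀ i : ℤ, 0 < i → ∀ f : X ⟶ Y⟦i⟧, f = 0)
    (hadd : ∀ X ∈ P, ∀ Y ∈ P, (X ⊞ Y) ∈ P)
    (hgen : HGen P) {m : ℤ} {Y : C} (hY : Y ∈ Rc P (m-1)) : Y ∈ GeR P m := by
  obtain ⟨M, a, b, i, r, hir, hMle, hMrc⟩ := exists_retract hzero hconn hgen Y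
  obtain ⟨A, B, f, p, δ, hT, hA, hB⟩ := decompE hzero hconn hMle (m-1)
  have hfr : f ≫ r = 0 := hY A hA _
  obtain ⟨ρ', hρ'⟩ : ∃ ρ' : B ⟶ Y, r = p ≫ ρ' := Triangle.yoneda_exact₂ _ hT r hfr
  have hBle : B ∈ LeC P (max b m) := by
    refine ec_triangle (leC_ec _) (rot_of_distTriang _ hT)
      (leC_mono (le_max_left _ _) hMle) ?_
    have h1 := leC_shift hzero hA 1
    have e : m - 1 + 1 = m := by omega
    rw [e] at h1
    exact leC_mono (le_max_right _ _) h1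
  have hBge : B ∈ GeR P m :=
    rc_bounded_geR hzero hconn hadd (max b m - m).toNat m (max b m)
      (by omega) B hBle hB
  refine geR_rc m B Y (i ≫ p) ρ' ?_ hBge
  rw [Category.assoc, ← hρ', hir]

lemma geR_eq_rc (hzero : ∀ X : C, IsZero X → X ∈ P)
    (hconn : ∀ X ∈ P, ∀ Y ∈ P, ∀ i : ℤ, 0 < i → ∀ f : X ⟶ Y⟦i⟧, f = 0)
    (hadd : ∀ X ∈ P, ∀ Y ∈ P, (X ⊞ Y) ∈ P)
    (hgen : HGen P) (m : ℤ) : GeR P m = Rc P (m-1) := by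
  apply Set.eq_of_subset_of_subset
  · exact geR_sub_rc hconn (by omega)
  · intro Y hY
    exact rc_sub_geR hzero hconn hadd hgen hY

lemma leR_eq_lhat (hzero : ∀ X : C, IsZero X → X ∈ P)
    (hconn : ∀ X ∈ P, ∀ Y ∈ P, ∀ i : ℤ, 0 < i → ∀ f : X ⟶ Y⟦i⟧, f = 0)
    (hgen : HGen P) (n : ℤ) : LeR P n = Lhat P n := by
  apply Set.eq_of_subset_of_subset
  · exact leR_sub_lhat n
  · intro X hX
    exact lhat_sub_leR hzero hconn hgen hX

end Univ

section ClaimR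

lemma dcp_of_heart (hconn : ∀ X ∈ P, ∀ Y ∈ P, ∀ i : ℤ, 0 < i → ∀ f : X ⟶ Y⟦i⟧, f = 0)
    {a n : ℤ} {X : C} (hX : X ∈ Heart P a) : Dcp P n X := by
  by_cases h : a ≤ n
  · exact dcp_of_lhat (lhat_mono h (leR_sub_lhat a (heart_sub_leR a hX)))
  · exact dcp_of_rc (geR_sub_rc hconn (by omega) (heart_sub_geR a hX))

/-- a retract which lives in `LeC (m-1)`-orthogonal complement of something bounded,
fibre lemma -/
lemma fiber_rc {A M B : C} {f : A ⟶ M} {p : M ⟶ B} {δ : B ⟶ A⟦(1:ℤ)⟧}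
    (hT : Triangle.mk f p δ ∈ distTriang C) (hzero : ∀ X : C, IsZero X → X ∈ P)
    {m c : ℤ} (hM : M ∈ Rc P (m-1)) (hB : B ∈ Rc P c) (hmc : m ≤ c) :
    A ∈ Rc P (m-1) := by
  intro T hTm t
  have h1 : t ≫ f = 0 := hM T hTm (t ≫ f)
  obtain ⟨g0, hg0⟩ := Triangle.coyoneda_exact₂ _ (inv_rot_of_distTriang _ hT) t
    (by exact h1)
  have hz : g0 = 0 := by
    apply hom_zero_to_shift (-1)
    intro g1
    have hmem : T⟦(1:ℤ)⟧ ∈ LeC P c := by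
      have h2 := leC_shift hzero hTm 1
      have e : m - 1 + 1 = m := by omega
      rw [e] at h2
      exact leC_mono hmc h2
    exact hB _ hmem g1
  rw [hg0, hz]; exact zero_comp

/-- main induction: retracts of bounded objects admit weight decompositions -/
lemma claimR (hzero : ∀ X : C, IsZero X → X ∈ P)
    (hconn : ∀ X ∈ P, ∀ Y ∈ P, ∀ i : ℤ, 0 < i → ∀ f : X ⟶ Y⟦i⟧, f = 0)
    (hadd : ∀ X ∈ P, ∀ Y ∈ P, (X ⊞ Y) ∈ P) :
    ∀ (k : ℕ) (a b : ℤ), b ≤ a + k → ∀ M : C, M ∈ LeC P b → M ∈ Rc P (a-1) →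
      ∀ (X : C) (i : X ⟶ M) (r : M ⟶ X), i ≫ r = 𝟙 X → ∀ n : ℤ, Dcp P n X := by
  intro k
  induction k with
  | zero =>
    intro a b hb M hMle hMrc X i r hir n
    have hM : M ∈ Heart P a :=
      pure_heart hzero hconn hadd (leC_mono (by omega) hMle) hMrc
    exact dcp_of_heart hconn (heart_retract a M X i r hir hM)
  | succ k ih =>
    intro a b hb M hMle hMrc X i r hir n
    by_cases hbk : b ≤ a + k
    · exact ih a b hbk M hMle hMrc X i r hir n
    · -- decompose `M` at level `a`, bottom slice is pure
      obtain ⟨A₁, B₁, fM, pM, δM, hTM, hA₁le, hB₁rc⟩ := decompE hzero hconn hMle a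
      have hA₁rc : A₁ ∈ Rc P (a-1) := fiber_rc hTM hzero hMrc hB₁rc (le_refl a)
      have hA₁heart : A₁ ∈ Heart P a := pure_heart hzero hconn hadd hA₁le hA₁rc
      -- the cone of `A₁ ⟶ X`
      obtain ⟨N, q, ε, hTX⟩ := distinguished_cocone_triangle (fM ≫ r)
      -- transfer of the idempotent
      have hfe : (fM ≫ (r ≫ i)) ≫ pM = 0 := by
        have : (fM ≫ (r ≫ i)) ≫ pM = fM ≫ ((r ≫ i) ≫ pM) := by
          simp only [Category.assoc]
        rw [this]
        exact hB₁rc A₁ hA₁le _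
      obtain ⟨eA, heA⟩ : ∃ eA : A₁ ⟶ A₁, fM ≫ (r ≫ i) = eA ≫ fM :=
        Triangle.coyoneda_exact₂ _ hTM (fM ≫ (r ≫ i)) hfe
      obtain ⟨j₀, hj₀1, hj₀2⟩ : ∃ j₀ : N ⟶ B₁, q ≫ j₀ = i ≫ pM ∧ ε ≫ eA⟦(1:ℤ)⟧' = j₀ ≫ δM :=
        complete_distinguished_triangle_morphism
        (Triangle.mk (fM ≫ r) q ε) (Triangle.mk fM pM δM) hTX hTM eA i (by
          show (fM ≫ r) ≫ i = eA ≫ fM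
          rw [Category.assoc, ← heA])
      obtain ⟨k₀, hk₀1, hk₀2⟩ : ∃ k₀ : B₁ ⟶ N, pM ≫ k₀ = r ≫ q ∧ δM ≫ (𝟙 A₁)⟦(1:ℤ)⟧' = k₀ ≫ ε :=
        complete_distinguished_triangle_morphism
        (Triangle.mk fM pM δM) (Triangle.mk (fM ≫ r) q ε) hTM hTX (𝟙 A₁) r (by
          show fM ≫ r = 𝟙 A₁ ≫ (fM ≫ r)
          rw [Category.id_comp])
      let j₀' : N ⟶ B₁ := j₀
      let k₀' : B₁ ⟶ N := k₀
      have hj1 : q ≫ j₀' = i ≫ pM := hj₀1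
      have hk1 : pM ≫ k₀' = r ≫ q := hk₀1
      -- the defect
      have hq : q ≫ (𝟙 N - j₀' ≫ k₀') = 0 := by
        rw [Preadditive.comp_sub, Category.comp_id, ← Category.assoc, hj1,
          Category.assoc, hk1, ← Category.assoc, hir, Category.id_comp, sub_self]
      obtain ⟨ξ, hξ⟩ : ∃ ξ : A₁⟦(1:ℤ)⟧ ⟶ N, 𝟙 N - j₀' ≫ k₀' = ε ≫ ξ :=
        Triangle.yoneda_exact₃ _ hTX (𝟙 N - j₀' ≫ k₀') hq
      -- N is a retract of B₁ ⊞ A₁⟦1⟧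
      have hJK : biprod.lift j₀' ε ≫ biprod.desc k₀' ξ = 𝟙 N := by
        rw [biprod.lift_desc, ← hξ]
        abel
      -- memberships of B₁ ⊞ A₁⟦1⟧
      have hA₁s_le : A₁⟦(1:ℤ)⟧ ∈ LeC P (max b (a+1)) := by
        have h1 := leC_shift hzero hA₁le 1
        exact leC_mono (le_max_right _ _) h1
      have hB₁le : B₁ ∈ LeC P (max b (a+1)) := by
        refine ec_triangle (leC_ec _) (rot_of_distTriang _ hTM)
          (leC_mono (le_max_left _ _) hMle) hA₁s_le
      have hA₁s_rc : A₁⟦(1:ℤ)⟧ ∈ Rc P ((a+1)-1) := by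
        have h0 : A₁ ∈ Rc P (a-1) := hA₁rc
        have h1 := rc_shift hzero h0 1
        have e : a - 1 + 1 = a + 1 - 1 := by omega
        rwa [e] at h1
      have hB₁rc' : B₁ ∈ Rc P ((a+1)-1) := by
        have e : (a+1) - 1 = a := by omega
        rw [e]
        exact hB₁rc
      have hM'le : (B₁ ⊞ A₁⟦(1:ℤ)⟧) ∈ LeC P (max b (a+1)) := leC_biprod hB₁le hA₁s_le
      have hM'rc : (B₁ ⊞ A₁⟦(1:ℤ)⟧) ∈ Rc P ((a+1)-1) := rc_biprod hB₁rc' hA₁s_rc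
      -- induction : N has decompositions
      have hN : ∀ m : ℤ, Dcp P m N := by
        intro m
        exact ih (a+1) (max b (a+1)) (by omega) _ hM'le hM'rc N
          (biprod.lift j₀' ε) (biprod.desc k₀' ξ) hJK m
      -- glue the pure bottom with N
      obtain ⟨A₁', B₁', f', g', h', hT', hA', hB'⟩ := dcp_of_heart hconn (n := n) hA₁heart
      obtain ⟨A₂', B₂', f₂', g₂', h₂', hT₂', hA₂', hB₂'⟩ := hN n
      obtain ⟨A, B, ff, gg, hh, hTf, ⟨α, β, γ, hT₄⟩, hB⟩ :=
        glue hzero hTX hT' hB' hT₂' hA₂' hB₂'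
      exact ⟨A, B, ff, gg, hh, hTf, lhat_ec n α β γ hT₄ hA' hA₂', hB⟩

/-- every object admits weight decompositions at every level -/
lemma decomp_all (hzero : ∀ X : C, IsZero X → X ∈ P)
    (hconn : ∀ X ∈ P, ∀ Y ∈ P, ∀ i : ℤ, 0 < i → ∀ f : X ⟶ Y⟦i⟧, f = 0)
    (hadd : ∀ X ∈ P, ∀ Y ∈ P, (X ⊞ Y) ∈ P)
    (hgen : HGen P) (X : C) (n : ℤ) : Dcp P n X := by
  obtain ⟨M, a, b, i, r, hir, hMle, hMrc⟩ := exists_retract hzero hconn hgen X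
  exact claimR hzero hconn hadd (b - a).toNat a b (by omega) M hMle hMrc X i r hir n

end ClaimR

section HeartEq

/-- every finite biproduct of objects of `P` is isomorphic to an object of `P` -/
lemma sum_iso_P (hzero : ∀ X : C, IsZero X → X ∈ P)
    (hadd : ∀ X ∈ P, ∀ Y ∈ P, (X ⊞ Y) ∈ P) [HasFiniteBiproducts C] :
    ∀ (k : ℕ) (f : Fin k → C), (∀ i, f i ∈ P) → ∃ W ∈ P, Nonempty ((⨁ f) ≅ W) := by
  intro k
  induction k with
  | zero =>
    intro f hf
    refine ⟨0, hzero _ (isZero_zero C), ⟨?_⟩⟩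
    refine IsZero.iso ?_ (isZero_zero C)
    rw [IsZero.iff_id_eq_zero]
    apply biproduct.hom_ext
    intro j
    exact j.elim0
  | succ k ih =>
    intro f hf
    obtain ⟨W', hW', ⟨e'⟩⟩ := ih (fun j => f j.succ) (fun j => hf j.succ)
    refine ⟨f 0 ⊞ W', hadd _ (hf 0) _ hW', ⟨?_⟩⟩
    refine Iso.trans ?_ (biprod.mapIso (Iso.refl (f 0)) e')
    have hdπ0 : (biproduct.desc fun (j : Fin k) => biproduct.ι f j.succ) ≫ biproduct.π f 0 = 0 := by
      apply biproduct.hom_ext'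
      intro j
      have := Fin.succ_ne_zero j
      simp [biproduct.ι_π, this]
    have hdπs : ∀ j : Fin k, (biproduct.desc fun (i : Fin k) => biproduct.ι f i.succ) ≫
        biproduct.π f j.succ = biproduct.π (fun (i : Fin k) => f i.succ) j := by
      intro j
      apply biproduct.hom_ext'
      intro i
      by_cases hij : i = j
      · subst hij; simp [biproduct.ι_π]
      · simp [biproduct.ι_π, Fin.succ_inj, hij]
    have hιπ0 : biproduct.ι f 0 ≫ (biproduct.lift fun (j : Fin k) => biproduct.π f j.succ) = 0 := by
      apply biproduct.hom_ext
      intro j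
      have : (0 : Fin (k+1)) ≠ j.succ := Ne.symm (Fin.succ_ne_zero j)
      simp [biproduct.ι_π, this]
    exact
      { hom := biprod.lift (biproduct.π f 0) (biproduct.lift (fun j => biproduct.π f j.succ))
        inv := biprod.desc (biproduct.ι f 0) (biproduct.desc (fun j => biproduct.ι f j.succ))
        hom_inv_id := by
          apply biproduct.hom_ext
          intro j
          induction j using Fin.cases with
          | zero =>
            simp [biproduct.ι_π, hdπ0, hιπ0]
          | succ j =>
            have h1 : j.succ ≠ 0 := Fin.succ_ne_zero j
            have h2 : ¬ (0 : Fin (k+1)) = j.succ := Ne.symm (Fin.succ_ne_zero j)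
            simp [biproduct.ι_π, h1, h2, hdπs]
        inv_hom_id := by
          apply biprod.hom_ext'
          · apply biprod.hom_ext
            · simp [biproduct.ι_π]
            · simp [hιπ0]
          · apply biprod.hom_ext
            · simp [hdπ0]
            · apply biproduct.hom_ext
              intro j
              simp [hdπs, biproduct.lift_π] }

/-- the heart at level 0 equals the set in the statement -/
lemma heart_zero_eq (hzero : ∀ X : C, IsZero X → X ∈ P)
    (hadd : ∀ X ∈ P, ∀ Y ∈ P, (X ⊞ Y) ∈ P) [HasFiniteBiproducts C] :
    Heart P 0 = {X : C | ∃ (n : ℕ) (f : Fin n → C), (∀ i, f i ∈ P) ∧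
      ∃ (s : X ⟶ ⨁ f) (r : (⨁ f) ⟶ X), s ≫ r = 𝟙 X} := by
  apply Set.eq_of_subset_of_subset
  · rintro X ⟨W, hW, i, r, hir⟩
    refine ⟨1, fun _ => W, fun _ => hW, i ≫ ((shiftFunctorZero C ℤ).app W).hom ≫
      biproduct.ι (fun (_ : Fin 1) => W) 0,
      biproduct.π (fun (_ : Fin 1) => W) 0 ≫ ((shiftFunctorZero C ℤ).app W).inv ≫ r, ?_⟩
    calc (i ≫ ((shiftFunctorZero C ℤ).app W).hom ≫ biproduct.ι (fun (_ : Fin 1) => W) 0) ≫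
        biproduct.π (fun (_ : Fin 1) => W) 0 ≫ ((shiftFunctorZero C ℤ).app W).inv ≫ r
        = i ≫ ((shiftFunctorZero C ℤ).app W).hom ≫
          (biproduct.ι (fun (_ : Fin 1) => W) 0 ≫ biproduct.π (fun (_ : Fin 1) => W) 0) ≫
          ((shiftFunctorZero C ℤ).app W).inv ≫ r := by simp only [Category.assoc]
    _ = 𝟙 X := by rw [biproduct.ι_π_self]; simp [hir]
  · rintro X ⟨k, f, hf, s, r, hsr⟩
    obtain ⟨W, hW, ⟨e⟩⟩ := sum_iso_P hzero hadd k f hf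
    refine ⟨W, hW, s ≫ e.hom ≫ ((shiftFunctorZero C ℤ).app W).symm.hom,
      ((shiftFunctorZero C ℤ).app W).symm.inv ≫ e.inv ≫ r, ?_⟩
    simp [hsr]

end HeartEq

section Final

lemma heart_eq_inter (hzero : ∀ X : C, IsZero X → X ∈ P)
    (hconn : ∀ X ∈ P, ∀ Y ∈ P, ∀ i : ℤ, 0 < i → ∀ f : X ⟶ Y⟦i⟧, f = 0)
    (hadd : ∀ X ∈ P, ∀ Y ∈ P, (X ⊞ Y) ∈ P)
    (hgen : HGen P) : LeR P 0 ∩ GeR P 0 = Heart P 0 := by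
  apply Set.eq_of_subset_of_subset
  · rintro X ⟨hX1, hX2⟩
    have hXrc : X ∈ Rc P ((0:ℤ)-1) := by
      have h1 : X ∈ Rc P (-1) := geR_sub_rc hconn (by omega) hX2
      have e : (-1:ℤ) = 0 - 1 := by norm_num
      rwa [e] at h1
    -- X is a retract of an object of `LeC 0`
    obtain ⟨M, a, b, i, r, hir, hMle, hMrc⟩ := exists_retract hzero hconn hgen X
    obtain ⟨A, B, f, p, δ, hT, hA, hB⟩ := decompE hzero hconn hMle 0
    have hip : i ≫ p = 0 := leR_sub_lhat 0 hX1 B hB _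
    obtain ⟨σ, hσ⟩ : ∃ σ : X ⟶ A, i = σ ≫ f := Triangle.coyoneda_exact₂ _ hT i hip
    have hret : σ ≫ (f ≫ r) = 𝟙 X := by rw [← Category.assoc, ← hσ, hir]
    -- top decomposition of A
    obtain ⟨F, W0, ff, gg, hh, hTt, hFv, hW0⟩ := top hzero hconn hadd hA
    have hft : ff ≫ (f ≫ r) = 0 := hFv X hXrc _
    obtain ⟨χ, hχ⟩ : ∃ χ : W0 ⟶ X, f ≫ r = gg ≫ χ := Triangle.yoneda_exact₂ _ hTt (f ≫ r) hft
    refine heart_retract 0 W0 X (σ ≫ gg) χ ?_ hW0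
    rw [Category.assoc, ← hχ, hret]
  · intro X hX
    exact ⟨heart_sub_leR 0 hX, heart_sub_geR 0 hX⟩

variable (w' : WeightStructure C)

lemma wle_ec (n : ℤ) : EC (w'.le n) := by
  intro A B Z f g h hT hA hZ
  obtain ⟨A', B', fd, gd, hd, hTd, hA', hB'⟩ := w'.decomp B n
  have hfgd : f ≫ gd = 0 := w'.orth n A B' hA hB' _
  obtain ⟨t, ht⟩ : ∃ t : Z ⟶ B', gd = g ≫ t := Triangle.yoneda_exact₂ _ hT gd hfgd
  have hgd : (Triangle.mk fd gd hd).mor₂ = 0 := by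
    show gd = 0
    rw [ht, w'.orth n Z B' hZ hB' t, comp_zero]
  obtain ⟨s, hs⟩ := section_of_mor₂_zero hTd hgd
  exact w'.retract_le n A' B s fd hs hA'

lemma wge_ec (m : ℤ) : EC (w'.ge m) := by
  intro A B Z f g h hT hA hZ
  obtain ⟨A', B', fd, gd, hd, hTd, hA', hB'⟩ := w'.decomp B (m-1)
  have hfdg : fd ≫ g = 0 :=
    w'.orth (m-1) A' Z hA' (w'.ge_anti _ _ (by omega) hZ) _
  obtain ⟨t, ht⟩ : ∃ t : A' ⟶ A, fd = t ≫ f := Triangle.coyoneda_exact₂ _ hT fd hfdg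
  have hfd : (Triangle.mk fd gd hd).mor₁ = 0 := by
    show fd = 0
    rw [ht, w'.orth (m-1) A' A hA' (w'.ge_anti _ _ (by omega) hA) t, zero_comp]
  obtain ⟨rr, hrr⟩ := retraction_of_mor₁_zero hTd hfd
  exact w'.retract_ge m B' B gd rr hrr (w'.ge_anti _ _ (by omega) hB')

lemma leR_sub_wle (hP' : ∀ X ∈ P, X ∈ w'.le 0 ∩ w'.ge 0) (n : ℤ) :
    LeR P n ⊆ w'.le n := by
  intro X hX
  refine hX _ ⟨fun Q hQ i hi => ?_, wle_ec w' n, fun A B ii rr hir hA =>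
    w'.retract_le n A B ii rr hir hA⟩
  exact w'.le_mono (0 + i) n (by omega) (w'.shift_le 0 i Q (hP' Q hQ).1)

lemma geR_sub_wge (hP' : ∀ X ∈ P, X ∈ w'.le 0 ∩ w'.ge 0) (m : ℤ) :
    GeR P m ⊆ w'.ge m := by
  intro X hX
  refine hX _ ⟨fun Q hQ i hi => ?_, wge_ec w' m, fun A B ii rr hir hA =>
    w'.retract_ge m A B ii rr hir hA⟩
  exact w'.ge_anti m (0 + i) (by omega) (w'.shift_ge 0 i Q (hP' Q hQ).2)

lemma wle_sub_leR (hzero : ∀ X : C, IsZero X → X ∈ P)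
    (hconn : ∀ X ∈ P, ∀ Y ∈ P, ∀ i : ℤ, 0 < i → ∀ f : X ⟶ Y⟦i⟧, f = 0)
    (hadd : ∀ X ∈ P, ∀ Y ∈ P, (X ⊞ Y) ∈ P)
    (hgen : HGen P) (hP' : ∀ X ∈ P, X ∈ w'.le 0 ∩ w'.ge 0) (n : ℤ) :
    w'.le n ⊆ LeR P n := by
  intro X hX
  obtain ⟨A, B, f, g, h, hT, hA, hB⟩ := decomp_all hzero hconn hadd hgen X n
  have hBge : B ∈ GeR P (n+1) := by
    apply rc_sub_geR hzero hconn hadd hgen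
    have e : n + 1 - 1 = n := by omega
    rw [e]
    exact hB
  have hg : (Triangle.mk f g h).mor₂ = 0 :=
    w'.orth n X B hX (geR_sub_wge w' hP' (n+1) hBge) g
  obtain ⟨s, hs⟩ := section_of_mor₂_zero hT hg
  exact leR_rc n A X s f hs (lhat_sub_leR hzero hconn hgen hA)

lemma wge_sub_geR (hzero : ∀ X : C, IsZero X → X ∈ P)
    (hconn : ∀ X ∈ P, ∀ Y ∈ P, ∀ i : ℤ, 0 < i → ∀ f : X ⟶ Y⟦i⟧, f = 0)
    (hadd : ∀ X ∈ P, ∀ Y ∈ P, (X ⊞ Y) ∈ P)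
    (hgen : HGen P) (hP' : ∀ X ∈ P, X ∈ w'.le 0 ∩ w'.ge 0) (m : ℤ) :
    w'.ge m ⊆ GeR P m := by
  intro X hX
  obtain ⟨A, B, f, g, h, hT, hA, hB⟩ := decomp_all hzero hconn hadd hgen X (m-1)
  have hALe : A ∈ w'.le (m-1) :=
    leR_sub_wle w' hP' (m-1) (lhat_sub_leR hzero hconn hgen hA)
  have hf : (Triangle.mk f g h).mor₁ = 0 :=
    w'.orth (m-1) A X hALe (w'.ge_anti _ _ (by omega) hX) f
  obtain ⟨rr, hrr⟩ := retraction_of_mor₁_zero hT hf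
  exact geR_rc m B X g rr hrr (rc_sub_geR hzero hconn hadd hgen hB)

end Final

end WSAux

open WSAux in
/-- If `C` is densely generated by a connective additive subcategory (with object class `P`),
then there is exactly one weight structure on `C` whose heart contains `P`; it is bounded, its
heart is the retraction-closure of `P` (retracts of finite direct sums of objects of `P`), and
`C_{w≥0}` (resp. `C_{w≤0}`) is the smallest extension- and retraction-closed class containing
the `P[i]` for `i ≥ 0` (resp. `i ≤ 0`). -/
theorem unique_weight_structure_of_dense_connective_generators
    [HasFiniteBiproducts C] (P : Set C)
    (hzero : ∀ X : C, IsZero X → X ∈ P)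
    (hadd : ∀ X ∈ P, ∀ Y ∈ P, (X ⊞ Y) ∈ P)
    (hconn : ∀ X ∈ P, ∀ Y ∈ P, ∀ i : ℤ, 0 < i → ∀ f : X ⟶ Y⟦i⟧, f = 0)
    (hgen : ∀ S : Set C, ThickClass C S → P ⊆ S → S = Set.univ) :
    ∃ w : WeightStructure C,
      (∀ X ∈ P, X ∈ w.le 0 ∩ w.ge 0) ∧
      (∀ w' : WeightStructure C, (∀ X ∈ P, X ∈ w'.le 0 ∩ w'.ge 0) → w' = w) ∧
      (∀ X : C, ∃ n m : ℤ, X ∈ w.le n ∧ X ∈ w.ge m) ∧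
      (w.le 0 ∩ w.ge 0) = {X : C | ∃ (n : ℕ) (f : Fin n → C), (∀ i, f i ∈ P) ∧
        ∃ (s : X ⟶ ⨁ f) (r : (⨁ f) ⟶ X), s ≫ r = 𝟙 X} ∧
      w.ge 0 = ⋂₀ {S : Set C | (∀ X ∈ P, ∀ i : ℤ, 0 ≤ i → X⟦i⟧ ∈ S) ∧
        ExtensionClosed C S ∧ RetractionClosed C S} ∧
      w.le 0 = ⋂₀ {S : Set C | (∀ X ∈ P, ∀ i : ℤ, i ≤ 0 → X⟦i⟧ ∈ S) ∧
        ExtensionClosed C S ∧ RetractionClosed C S} := by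
  have hgen' : HGen P := by
    intro S hz hs he hr hPS
    exact hgen S ⟨hz, hs, he, hr⟩ hPS
  refine ⟨{
    le := fun n => LeR P n
    ge := fun n => GeR P n
    retract_le := fun n X Y i r hir hX => leR_rc n X Y i r hir hX
    retract_ge := fun n X Y i r hir hX => geR_rc n X Y i r hir hX
    shift_le := fun n i X hX => leR_shift hX i
    shift_ge := fun n i X hX => geR_shift hX i
    le_mono := fun n m h => leR_mono h
    ge_anti := fun n m h => geR_anti h
    orth := fun n X Y hX hY f => orth_main hconn hX hY f
    decomp := fun X n => by
      obtain ⟨A, B, f, g, h, hT, hA, hB⟩ := decomp_all hzero hconn hadd hgen' X n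
      refine ⟨A, B, f, g, h, hT, lhat_sub_leR hzero hconn hgen' hA, ?_⟩
      apply rc_sub_geR hzero hconn hadd hgen'
      have e : n + 1 - 1 = n := by omega
      rw [e]
      exact hB }, ?_, ?_, ?_, ?_, ?_, ?_⟩
  · intro X hX
    exact ⟨leR_iso (leR_gen hX (le_refl 0)) ((shiftFunctorZero C ℤ).app X),
      geR_iso (geR_gen hX (le_refl 0)) ((shiftFunctorZero C ℤ).app X)⟩
  · intro w' hP'
    have hle : w'.le = fun n => LeR P n := by
      funext n
      exact Set.eq_of_subset_of_subset
        (wle_sub_leR w' hzero hconn hadd hgen' hP' n) (leR_sub_wle w' hP' n)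
    have hge : w'.ge = fun n => GeR P n := by
      funext n
      exact Set.eq_of_subset_of_subset
        (wge_sub_geR w' hzero hconn hadd hgen' hP' n) (geR_sub_wge w' hP' n)
    cases w'
    dsimp at hle hge
    subst hle
    subst hge
    rfl
  · intro X
    obtain ⟨M, a, b, i, r, hir, hMle, hMrc⟩ := exists_retract hzero hconn hgen' X
    refine ⟨b, a, leR_rc b M X i r hir (leC_sub_leR b hMle), ?_⟩
    exact geR_rc a M X i r hir (rc_sub_geR hzero hconn hadd hgen' hMrc)
  · dsimp only
    rw [heart_eq_inter hzero hconn hadd hgen', heart_zero_eq hzero hadd]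
  · rfl
  · rfl
end
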